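/- arXiv:0706.2718 — 5 statements merged into one kernel-verified Lean document; each statement's English description precedes it below -/
import Mathlib

section
/- Let C be a conformal algebra. Then the left associativity identity (a∘ₙb)∘ₘc = Σ_{s≥0} (−1)^s·C(n,s)·a∘_{n−s}(b∘_{m+s}c) holds for all a,b,c ∈ C and all n,m ∈ ℕ if and only if the right associativity identity a∘ₙ(b∘ₘc) = Σ_{s≥0} C(n,s)·(a∘_{n−s}b)∘_{m+s}c holds for all a,b,c ∈ C and all n,m ∈ ℕ. -/
/-! ### Conformal algebras: basic definitions -/

/-- A conformal algebra over a field `k`: a `k`-vector space with a linear map `D`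
and a family of bilinear `n`-th products satisfying (C1) locality, (C2) and (C3). -/
structure ConfAlg (k : Type) [Field k] (C : Type) [AddCommGroup C] [Module k C] where
  Dmap : C →ₗ[k] C
  prod : ℕ → C →ₗ[k] C →ₗ[k] C
  locality : ∀ a b : C, ∃ N : ℕ, ∀ m, N ≤ m → prod m a b = 0
  axC2 : ∀ (m : ℕ) (a b : C), prod m (Dmap a) b = -((m : k)) • prod (m - 1) a b
  axC3 : ∀ (m : ℕ) (a b : C),
    prod m a (Dmap b) = Dmap (prod m a b) + (m : k) • prod (m - 1) a b

section BasicDefs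

variable {k : Type} [Field k] {C : Type} [AddCommGroup C] [Module k C]

/-- Left associativity identity for a conformal algebra. -/
def ConfAlg.IsAssoc (A : ConfAlg k C) : Prop :=
  ∀ (nn m : ℕ) (a b c : C),
    A.prod m (A.prod nn a b) c =
      ∑ s ∈ Finset.range (nn + 1),
        ((-1 : k) ^ s * (nn.choose s : k)) • A.prod (nn - s) a (A.prod (m + s) b c)

/-- A ℤ₂-grading of a conformal algebra: `grade false` is the even part,
`grade true` the odd part. -/
structure ConfGrading (A : ConfAlg k C) where
  grade : Bool → Submodule k C
  inf_bot : grade false ⊓ grade true = ⊥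
  sup_top : grade false ⊔ grade true = ⊤
  D_mem : ∀ (i : Bool), ∀ x ∈ grade i, A.Dmap x ∈ grade i
  prod_mem : ∀ (i j : Bool) (m : ℕ) (x y : C), x ∈ grade i → y ∈ grade j →
    A.prod m x y ∈ grade (xor i j)

/-- The "conjugate" product `{b ∘ₘ a} = ∑_{s ≥ 0} ((-1)^{m+s}/s!) • Dˢ (b ∘_{m+s} a)`,
a finite sum by locality, expressed via `finsum`. -/
noncomputable def cbrR (D : C →ₗ[k] C) (P : ℕ → C →ₗ[k] C →ₗ[k] C)
    (m : ℕ) (b a : C) : C :=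
  ∑ᶠ s : ℕ, ((-1 : k) ^ (m + s) * ((Nat.factorial s : k))⁻¹) • (D ^ s) (P (m + s) b a)

/-- The super-commutator `[a ∘ₘ b] = a ∘ₘ b - (-1)^{p(a)p(b)} {b ∘ₘ a}` for homogeneous
`a, b` of parities `pa, pb` (`false` = even, `true` = odd). -/
noncomputable def sbrR (D : C →ₗ[k] C) (P : ℕ → C →ₗ[k] C →ₗ[k] C)
    (pa pb : Bool) (m : ℕ) (a b : C) : C :=
  P m a b - (if pa && pb then (-1 : k) else 1) • cbrR D P m b a

/-- The defining relations of the Lie conformal superalgebra `Wₙ`, for homogeneous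
elements `V` (even), `X i`, `Pd i` (odd) of an associative conformal algebra with
derivation `D` and products `P`. -/
noncomputable def WRelsR (D : C →ₗ[k] C) (P : ℕ → C →ₗ[k] C →ₗ[k] C) {n : ℕ}
    (V : C) (X Pd : Fin n → C) : Prop :=
  (∀ i j, sbrR D P true true 0 (X i) (X j) = - sbrR D P true true 0 (X j) (X i)) ∧
  (∀ (m : ℕ) (i j), sbrR D P true true m (Pd i) (Pd j) = 0) ∧
  (∀ i j, sbrR D P true true 0 (Pd j) (X i) = if i = j then V else 0) ∧
  (∀ i, sbrR D P false true 0 V (X i) = D (X i)) ∧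
  (∀ i, sbrR D P true false 0 (X i) V = D (X i)) ∧
  (∀ i, sbrR D P true false 1 (X i) V = (2 : k) • X i) ∧
  (∀ j, sbrR D P true false 0 (Pd j) V = 0) ∧
  (∀ j, sbrR D P true false 1 (Pd j) V = Pd j) ∧
  (∀ i j, sbrR D P true true 0 (X i) (X j)
      = ((2 : k))⁻¹ • D (sbrR D P true true 1 (X i) (X j))) ∧
  (sbrR D P false false 0 V V = D V) ∧
  (sbrR D P false false 1 V V = (2 : k) • V) ∧
  (∀ m, 2 ≤ m →
    (∀ i j, sbrR D P true true m (X i) (X j) = 0) ∧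
    (∀ j, sbrR D P false true m V (Pd j) = 0) ∧
    (∀ i j, sbrR D P true true m (X i) (Pd j) = 0) ∧
    (∀ i, sbrR D P false true m V (X i) = 0) ∧
    sbrR D P false false m V V = 0)

end BasicDefs

/-! Each associativity identity says that one of the two iterated products
`(n, m) ↦ (a ∘ₙ b) ∘ₘ c` and `(n, m) ↦ a ∘ₙ (b ∘ₘ c)` is the binomial transform
`G ↦ ∑ₛ εˢ C(n,s) G (n-s) (m+s)` of the other, with `ε = -1` and `ε = 1` respectively.
By the binomial theorem these transforms compose by adding the parameters, so the
transforms with parameters `ε` and `-ε` are mutually inverse. -/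

open Finset

lemma add_pow_mul_choose {R : Type*} [CommSemiring R] (a b : R) (n u : ℕ) :
    (a + b) ^ u * n.choose u
      = ∑ s ∈ range (u + 1), a ^ s * b ^ (u - s) * n.choose s * (n - s).choose (u - s) := by
  rw [add_pow, sum_mul]
  refine sum_congr rfl fun s hs => ?_
  have hsu : s ≤ u := Nat.lt_succ_iff.mp (mem_range.mp hs)
  rw [mul_assoc _ (n.choose s : R), ← Nat.cast_mul, ← Nat.choose_mul hsu, Nat.cast_mul]
  ring

section BinomialShift

variable {R M : Type*}

def binomialShift [Semiring R] [AddCommMonoid M] [Module R M] (ε : R) (G : ℕ → ℕ → M)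
    (n m : ℕ) : M :=
  ∑ s ∈ range (n + 1), (ε ^ s * n.choose s) • G (n - s) (m + s)

theorem binomialShift_zero [Semiring R] [AddCommMonoid M] [Module R M] (G : ℕ → ℕ → M) :
    binomialShift (0 : R) G = G := by
  ext n m
  rw [binomialShift, sum_eq_single 0]
  · simp
  · intro s _ hs
    simp [hs]
  · simp

theorem binomialShift_binomialShift [CommSemiring R] [AddCommMonoid M] [Module R M]
    (a b : R) (G : ℕ → ℕ → M) :
    binomialShift a (binomialShift b G) = binomialShift (a + b) G := by
  ext n m
  have expand : ∀ s ∈ range (n + 1),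
      (a ^ s * n.choose s) • binomialShift b G (n - s) (m + s)
        = ∑ t ∈ range (n + 1 - s), (a ^ s * b ^ t * n.choose s * (n - s).choose t) •
            G (n - (s + t)) (m + (s + t)) := by
    intro s hs
    have hsn : n - s + 1 = n + 1 - s := by have := mem_range.mp hs; omega
    rw [binomialShift, smul_sum, hsn]
    refine sum_congr rfl fun t _ => ?_
    rw [smul_smul, Nat.sub_sub, add_assoc]
    ring_nf
  rw [binomialShift, sum_congr rfl expand, ← sum_range_diag_flip, binomialShift]
  refine sum_congr rfl fun u _ => ?_
  rw [add_pow_mul_choose, sum_smul]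
  refine sum_congr rfl fun s hs => ?_
  rw [Nat.add_sub_cancel' (Nat.lt_succ_iff.mp (mem_range.mp hs))]

theorem eq_binomialShift_iff [CommRing R] [AddCommGroup M] [Module R M] (ε : R)
    (F G : ℕ → ℕ → M) : F = binomialShift ε G ↔ G = binomialShift (-ε) F := by
  constructor
  · rintro rfl
    rw [binomialShift_binomialShift, neg_add_cancel, binomialShift_zero]
  · rintro rfl
    rw [binomialShift_binomialShift, add_neg_cancel, binomialShift_zero]

end BinomialShift

theorem stmt_0_general {k : Type} [Field k] {C : Type} [AddCommGroup C] [Module k C]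
    (A : ConfAlg k C) :
    (∀ (nn m : ℕ) (a b c : C),
        A.prod m (A.prod nn a b) c =
          ∑ s ∈ Finset.range (nn + 1),
            ((-1 : k) ^ s * (nn.choose s : k)) • A.prod (nn - s) a (A.prod (m + s) b c)) ↔
    (∀ (nn m : ℕ) (a b c : C),
        A.prod nn a (A.prod m b c) =
          ∑ s ∈ Finset.range (nn + 1),
            ((nn.choose s : k)) • A.prod (m + s) (A.prod (nn - s) a b) c) := by
  have key : ∀ a b c : C,
      (fun n m => A.prod m (A.prod n a b) c)
          = binomialShift (-1 : k) (fun n m => A.prod n a (A.prod m b c)) ↔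
        (fun n m => A.prod n a (A.prod m b c))
          = binomialShift (1 : k) (fun n m => A.prod m (A.prod n a b) c) := fun a b c => by
    rw [eq_binomialShift_iff, neg_neg]
  simp only [funext_iff, binomialShift, one_pow, one_mul] at key
  exact ⟨fun h nn m a b c => (key a b c).1 (fun n m => h n m a b c) nn m,
    fun h nn m a b c => (key a b c).2 (fun n m => h n m a b c) nn m⟩

/-- the left associativity identity holds for all `a,b,c` and all `n,m`
iff the right associativity identity does. -/
theorem stmt_0 {k : Type} [Field k] [CharZero k] {C : Type} [AddCommGroup C] [Module k C]
    (A : ConfAlg k C) :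
    (∀ (nn m : ℕ) (a b c : C),
        A.prod m (A.prod nn a b) c =
          ∑ s ∈ Finset.range (nn + 1),
            ((-1 : k) ^ s * (nn.choose s : k)) • A.prod (nn - s) a (A.prod (m + s) b c)) ↔
    (∀ (nn m : ℕ) (a b c : C),
        A.prod nn a (A.prod m b c) =
          ∑ s ∈ Finset.range (nn + 1),
            ((nn.choose s : k)) • A.prod (m + s) (A.prod (nn - s) a b) c) :=
  stmt_0_general A
end

section
/- In the ℤ₂-graded associative conformal algebra W = k[D] ⊗ Aₙ[v], the elements V := v−D, Xᵢ := (v−D)ξᵢ, Pᵢ := ∂ᵢ (i = 1,…,n), with V even and Xᵢ, Pᵢ odd, satisfy the W-relations. (Equivalently, the map φ₁ : v ↦ v−D, ξᵢ ↦ (v−D)ξᵢ, ∂ᵢ ↦ ∂ᵢ defines a homomorphism of Lie conformal superalgebras from Wₙ into W^{(−)}.) -/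
set_option maxSynthPendingDepth 5

/-! ### The algebra `Aₙ` and the conformal algebra `W = k[D] ⊗ Aₙ[v]` -/

/-- Generators of the algebra `Aₙ`: `xi i` stands for `ξᵢ`, `pa i` for `∂ᵢ`. -/
inductive WGen (n : ℕ) : Type
  | xi : Fin n → WGen n
  | pa : Fin n → WGen n

/-- The defining relations of `Aₙ`:
`ξᵢξⱼ + ξⱼξᵢ = 0`, `∂ᵢ∂ⱼ + ∂ⱼ∂ᵢ = 0`, `∂ᵢξⱼ + ξⱼ∂ᵢ = δᵢⱼ·1`. -/
inductive ARel (k : Type) [Field k] (n : ℕ) :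
    FreeAlgebra k (WGen n) → FreeAlgebra k (WGen n) → Prop
  | xixi (i j : Fin n) : ARel k n
      (FreeAlgebra.ι k (WGen.xi i) * FreeAlgebra.ι k (WGen.xi j)
        + FreeAlgebra.ι k (WGen.xi j) * FreeAlgebra.ι k (WGen.xi i)) 0
  | papa (i j : Fin n) : ARel k n
      (FreeAlgebra.ι k (WGen.pa i) * FreeAlgebra.ι k (WGen.pa j)
        + FreeAlgebra.ι k (WGen.pa j) * FreeAlgebra.ι k (WGen.pa i)) 0
  | paxi (i j : Fin n) : ARel k n
      (FreeAlgebra.ι k (WGen.pa i) * FreeAlgebra.ι k (WGen.xi j)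
        + FreeAlgebra.ι k (WGen.xi j) * FreeAlgebra.ι k (WGen.pa i))
      (if i = j then 1 else 0)

/-- The algebra `Aₙ`. -/
abbrev An (k : Type) [Field k] (n : ℕ) := RingQuot (ARel k n)

/-- `Aₙ[v]`: polynomials over `Aₙ` in the variable `v` (= `Polynomial.X`). -/
abbrev Av (k : Type) [Field k] (n : ℕ) := Polynomial (An k n)

/-- `W = k[D] ⊗ Aₙ[v]`, realized as polynomials in the (outer) variable `D`
with coefficients in `Aₙ[v]`; the element `Dᵗ ⊗ w` is `(monomial t) w`. -/
abbrev Wc (k : Type) [Field k] (n : ℕ) := Polynomial (Av k n)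

/-- The generator `ξᵢ ∈ Aₙ`. -/
noncomputable def xg (k : Type) [Field k] (n : ℕ) (i : Fin n) : An k n :=
  RingQuot.mkAlgHom k (ARel k n) (FreeAlgebra.ι k (WGen.xi i))

/-- The generator `∂ᵢ ∈ Aₙ`. -/
noncomputable def dg (k : Type) [Field k] (n : ℕ) (i : Fin n) : An k n :=
  RingQuot.mkAlgHom k (ARel k n) (FreeAlgebra.ι k (WGen.pa i))

/-- The element `v = 1 ⊗ v ∈ W`. -/
noncomputable def vW (k : Type) [Field k] (n : ℕ) : Wc k n :=
  Polynomial.C Polynomial.X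

/-- The element `ξᵢ = 1 ⊗ ξᵢ ∈ W`. -/
noncomputable def xiW (k : Type) [Field k] (n : ℕ) (i : Fin n) : Wc k n :=
  Polynomial.C (Polynomial.C (xg k n i))

/-- The element `∂ᵢ = 1 ⊗ ∂ᵢ ∈ W`. -/
noncomputable def paW (k : Type) [Field k] (n : ℕ) (i : Fin n) : Wc k n :=
  Polynomial.C (Polynomial.C (dg k n i))

/-- The element `v - D = 1 ⊗ v - D ⊗ 1 ∈ W`. -/
noncomputable def vmD (k : Type) [Field k] (n : ℕ) : Wc k n :=
  (Polynomial.C (Polynomial.X : Av k n) : Wc k n) - (Polynomial.X : Wc k n)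

/-- The map `D` on `W`: multiplication by the outer variable. -/
noncomputable def Dm (k : Type) [Field k] (n : ℕ) : Wc k n →ₗ[k] Wc k n :=
  LinearMap.mulLeft k (Polynomial.X : Wc k n)

/-- The condition characterizing the conformal products of `W`:
`(1 ⊗ f) ∘ₘ (1 ⊗ g) = 1 ⊗ f·(∂ᵐ g/∂vᵐ)` together with axioms (C2) and (C3). -/
def IsWProd (k : Type) [Field k] (n : ℕ)
    (P : ℕ → Wc k n →ₗ[k] Wc k n →ₗ[k] Wc k n) : Prop :=
  (∀ (m : ℕ) (f g : Av k n),
      P m (Polynomial.C f) (Polynomial.C g)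
        = Polynomial.C (f * (fun q => Polynomial.derivative q)^[m] g)) ∧
  (∀ (m : ℕ) (a b : Wc k n), P m (Dm k n a) b = -((m : k)) • P (m - 1) a b) ∧
  (∀ (m : ℕ) (a b : Wc k n),
      P m a (Dm k n b) = Dm k n (P m a b) + (m : k) • P (m - 1) a b)

/-- The locality function `N_W(x,y) = min {N | x ∘ₘ y = 0 for all m ≥ N}`. -/
noncomputable def locNW (k : Type) [Field k] (n : ℕ)
    (P : ℕ → Wc k n →ₗ[k] Wc k n →ₗ[k] Wc k n) (x y : Wc k n) : ℕ :=
  sInf {N : ℕ | ∀ m, N ≤ m → P m x y = 0}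

/-- The smallest `D`-invariant subspace of `W` closed under all the products and
containing a set `S`. -/
noncomputable def confCl (k : Type) [Field k] (n : ℕ)
    (P : ℕ → Wc k n →ₗ[k] Wc k n →ₗ[k] Wc k n) (S : Set (Wc k n)) :
    Submodule k (Wc k n) :=
  sInf {U : Submodule k (Wc k n) | S ⊆ U ∧ (∀ x ∈ U, Dm k n x ∈ U) ∧
    ∀ (m : ℕ), ∀ x ∈ U, ∀ y ∈ U, P m x y ∈ U}

/-- The conformal subalgebra `C₁ ⊆ W`, generated by `v - D`, `(v - D)ξᵢ`, `∂ᵢ`. -/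
noncomputable def C1sub (k : Type) [Field k] (n : ℕ)
    (P : ℕ → Wc k n →ₗ[k] Wc k n →ₗ[k] Wc k n) : Submodule k (Wc k n) :=
  confCl k n P
    ({vmD k n} ∪ Set.range (fun i => vmD k n * xiW k n i) ∪ Set.range (paW k n))

/-- The conformal subalgebra `C₂ ⊆ W`, generated by `v`, `vξᵢ`, `∂ᵢ`. -/
noncomputable def C2sub (k : Type) [Field k] (n : ℕ)
    (P : ℕ → Wc k n →ₗ[k] Wc k n →ₗ[k] Wc k n) : Submodule k (Wc k n) :=
  confCl k n P
    ({vW k n} ∪ Set.range (fun i => vW k n * xiW k n i) ∪ Set.range (paW k n))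

/-
The generators `V = v - D`, `Xᵢ = (v - D)ξᵢ`, `Pᵢ = ∂ᵢ` all have the form `(v - D)a + b` with
`a, b ∈ Aₙ`. For two such elements the axioms (C2), (C3) and `f ∘ₘ g = f·∂ᵥᵐg` give
`x ∘₀ y = (va + b)·y`, `x ∘₁ y = (v - D)aa' + ab'` and `x ∘ₘ y = 0` for `m ≥ 2`, so the sum
defining `{y ∘ₘ x}` has at most two terms and every super-commutator is an explicit element of
`W`, polynomial in the central elements `v - D` and `D`. Each W-relation then reduces to one of
the defining relations of `Aₙ`.
-/

open Polynomial

section ConformalProducts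

variable {k C : Type} [Field k] [AddCommGroup C] [Module k C]
  {D : C →ₗ[k] C} {P : ℕ → C →ₗ[k] C →ₗ[k] C} {b a : C}

theorem cbrR_eq_sum_range (m N : ℕ) (h : ∀ s, N ≤ s → P (m + s) b a = 0) :
    cbrR D P m b a = ∑ s ∈ Finset.range N,
      ((-1 : k) ^ (m + s) * (s.factorial : k)⁻¹) • (D ^ s) (P (m + s) b a) := by
  refine finsum_eq_sum_of_support_subset _ fun s hs => ?_
  by_contra hsN
  simp only [Finset.coe_range, Set.mem_Iio, not_lt] at hsN
  exact hs (by simp only [h s hsN, map_zero, smul_zero])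

variable (h : ∀ j, 2 ≤ j → P j b a = 0)
include h

theorem cbrR_zero_of_forall_two_le : cbrR D P 0 b a = P 0 b a - D (P 1 b a) := by
  rw [cbrR_eq_sum_range 0 2 fun s hs => h _ (by omega)]
  simp [Finset.sum_range_succ, sub_eq_add_neg]

theorem cbrR_one_of_forall_two_le : cbrR D P 1 b a = -P 1 b a := by
  rw [cbrR_eq_sum_range 1 1 fun s hs => h _ (by omega)]
  simp

theorem cbrR_of_two_le {m : ℕ} (hm : 2 ≤ m) : cbrR D P m b a = 0 := by
  rw [cbrR_eq_sum_range m 0 fun s hs => h _ (by omega)]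
  simp

end ConformalProducts

section W

variable {k : Type} [Field k] {n : ℕ}

noncomputable def affW (a b : An k n) : Wc k n := vmD k n * C (C a) + C (C b)

theorem vW_eq_vmD_add_X : vW k n = vmD k n + X := by simp [vW, vmD]

theorem Dm_apply (p : Wc k n) : Dm k n p = X * p := rfl

theorem commute_C_C_vmD (a : An k n) : Commute (C (C a)) (vmD k n) := by
  refine Commute.sub_right ?_ (Polynomial.commute_X _).symm
  exact ((Polynomial.commute_X (C a)).symm).map C

theorem commute_vmD_X : Commute (vmD k n) X :=
  (Polynomial.commute_X _).symm

theorem affW_eq_C_sub_Dm (a b : An k n) :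
    affW a b = C (X * C a + C b) - Dm k n (C (C a)) := by
  simp only [affW, vmD, Dm_apply, sub_mul, map_add, map_mul]
  abel

theorem xg_mul_xg_comm (i j : Fin n) : xg k n j * xg k n i = -(xg k n i * xg k n j) := by
  have h := RingQuot.mkAlgHom_rel k (ARel.xixi (k := k) i j)
  rw [map_add, map_mul, map_mul, map_zero] at h
  exact eq_neg_of_add_eq_zero_right h

theorem dg_mul_dg_comm (i j : Fin n) : dg k n j * dg k n i = -(dg k n i * dg k n j) := by
  have h := RingQuot.mkAlgHom_rel k (ARel.papa (k := k) i j)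
  rw [map_add, map_mul, map_mul, map_zero] at h
  exact eq_neg_of_add_eq_zero_right h

theorem dg_mul_xg_add (i j : Fin n) :
    dg k n i * xg k n j + xg k n j * dg k n i = if i = j then 1 else 0 := by
  have h := RingQuot.mkAlgHom_rel k (ARel.paxi (k := k) i j)
  rw [map_add, map_mul, map_mul, apply_ite (RingQuot.mkAlgHom k (ARel k n)), map_one, map_zero] at h
  exact h

theorem vmD_eq_affW : vmD k n = affW 1 0 := by simp [affW]

theorem vmD_mul_xiW_eq_affW (i : Fin n) : vmD k n * xiW k n i = affW (xg k n i) 0 := by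
  simp [affW, xiW]

theorem paW_eq_affW (i : Fin n) : paW k n i = affW 0 (dg k n i) := by simp [affW, paW]

variable {Pr : ℕ → Wc k n →ₗ[k] Wc k n →ₗ[k] Wc k n} (hPr : IsWProd k n Pr)
include hPr

theorem IsWProd.prod_zero_C_sub_Dm (f g f' g' : Av k n) :
    Pr 0 (C f - Dm k n (C g)) (C f' - Dm k n (C g')) = C f * (C f' - Dm k n (C g')) := by
  obtain ⟨hC, h2, h3⟩ := hPr
  simp only [map_sub, LinearMap.sub_apply, h2, h3, hC, Nat.cast_zero, neg_zero, zero_smul,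
    add_zero, sub_zero, Function.iterate_zero_apply]
  simp only [Dm_apply, mul_sub, C_mul, ((commute_X (C f)).symm).left_comm]

theorem IsWProd.prod_one_C_sub_Dm (f g f' g' : Av k n) :
    Pr 1 (C f - Dm k n (C g)) (C f' - Dm k n (C g')) = C (f * derivative f')
      - Dm k n (C (f * derivative g')) - C (f * g') + C (g * f') - Dm k n (C (g * g')) := by
  obtain ⟨hC, h2, h3⟩ := hPr
  simp only [map_sub, LinearMap.sub_apply, h2, h3, hC, Nat.cast_one, one_smul, neg_smul,
    Nat.sub_self, Function.iterate_zero_apply, Function.iterate_one]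
  simp only [Nat.cast_zero, zero_smul, add_zero]
  abel

theorem IsWProd.prod_zero_affW (a b a' b' : An k n) :
    Pr 0 (affW a b) (affW a' b') = (vW k n * C (C a) + C (C b)) * affW a' b' := by
  rw [affW_eq_C_sub_Dm, affW_eq_C_sub_Dm, hPr.prod_zero_C_sub_Dm, ← affW_eq_C_sub_Dm]
  simp only [map_add, map_mul, vW]

theorem IsWProd.prod_one_affW (a b a' b' : An k n) :
    Pr 1 (affW a b) (affW a' b') = affW (a * a') (a * b') := by
  simp only [affW_eq_C_sub_Dm, hPr.prod_one_C_sub_Dm, derivative_add, derivative_mul,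
    derivative_X, derivative_C, one_mul, mul_zero, add_zero, map_zero]
  rw [mul_add, ((commute_X (C a)).symm.left_comm), ← C_mul, ← C_mul]
  abel

theorem IsWProd.prod_affW_of_two_le (a b a' b' : An k n) {m : ℕ} (hm : 2 ≤ m) :
    Pr m (affW a b) (affW a' b') = 0 := by
  obtain ⟨hC, h2, h3⟩ := hPr
  obtain ⟨m, rfl⟩ := Nat.exists_eq_add_of_le' hm
  simp only [affW_eq_C_sub_Dm, map_sub, LinearMap.sub_apply, h2, h3, hC]
  rcases m with _ | m
  · simp
  · simp [iterate_derivative_C]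

theorem IsWProd.sbrR_one_affW (pa pb : Bool) (a b a' b' : An k n) :
    sbrR (Dm k n) Pr pa pb 1 (affW a b) (affW a' b') =
      affW (a * a') (a * b') + (if pa && pb then (-1 : k) else 1) • affW (a' * a) (a' * b) := by
  rw [sbrR, cbrR_one_of_forall_two_le fun j hj => hPr.prod_affW_of_two_le _ _ _ _ hj,
    hPr.prod_one_affW, hPr.prod_one_affW, smul_neg, sub_neg_eq_add]

theorem IsWProd.sbrR_affW_of_two_le (pa pb : Bool) (a b a' b' : An k n) {m : ℕ} (hm : 2 ≤ m) :
    sbrR (Dm k n) Pr pa pb m (affW a b) (affW a' b') = 0 := by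
  rw [sbrR, cbrR_of_two_le (fun j hj => hPr.prod_affW_of_two_le _ _ _ _ hj) hm,
    hPr.prod_affW_of_two_le _ _ _ _ hm, smul_zero, sub_zero]

theorem IsWProd.sbrR_zero_affW (pa pb : Bool) (a b a' b' : An k n) :
    sbrR (Dm k n) Pr pa pb 0 (affW a b) (affW a' b') =
      let ε : k := if pa && pb then -1 else 1
      vmD k n * vmD k n * (C (C (a * a')) - ε • C (C (a' * a)))
        + vmD k n * (C (C (a * b' + b * a')) - ε • C (C (a' * b + b' * a)))
        + (C (C (b * b')) - ε • C (C (b' * b))) + Dm k n (affW (a * a') (a * b')) := by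
  rw [sbrR, cbrR_zero_of_forall_two_le fun j hj => hPr.prod_affW_of_two_le _ _ _ _ hj,
    hPr.prod_zero_affW, hPr.prod_zero_affW, hPr.prod_one_affW]
  simp only [affW, vW_eq_vmD_add_X, Dm_apply, map_add, mul_add, add_mul, mul_sub, mul_assoc,
    smul_add, smul_sub, mul_smul_comm, (commute_C_C_vmD _).left_comm,
    commute_vmD_X.symm.left_comm, ← C_mul]
  module

theorem IsWProd.sbrR_zero_vmD_affW (pb : Bool) (a b : An k n) :
    sbrR (Dm k n) Pr false pb 0 (affW 1 0) (affW a b) = Dm k n (affW a b) := by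
  simp [hPr.sbrR_zero_affW]

theorem IsWProd.sbrR_zero_affW_vmD (pa : Bool) (a b : An k n) :
    sbrR (Dm k n) Pr pa false 0 (affW a b) (affW 1 0) = Dm k n (affW a 0) := by
  simp [hPr.sbrR_zero_affW]

theorem IsWProd.sbrR_one_affW_vmD (pa : Bool) (a b : An k n) :
    sbrR (Dm k n) Pr pa false 1 (affW a b) (affW 1 0) = affW a 0 + affW a b := by
  simp [hPr.sbrR_one_affW]

theorem IsWProd.sbrR_zero_affW_of_anticomm {a a' : An k n} (h : a' * a = -(a * a')) :
    sbrR (Dm k n) Pr true true 0 (affW a 0) (affW a' 0) = Dm k n (affW (a * a') 0) := by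
  simp [hPr.sbrR_zero_affW, h]

theorem IsWProd.sbrR_one_affW_of_anticomm {a a' : An k n} (h : a' * a = -(a * a')) :
    sbrR (Dm k n) Pr true true 1 (affW a 0) (affW a' 0) = (2 : k) • affW (a * a') 0 := by
  rw [hPr.sbrR_one_affW]
  simp [h, affW, two_smul]

theorem IsWProd.sbrR_zero_affW_zero_left (b a' b' : An k n) :
    sbrR (Dm k n) Pr true true 0 (affW 0 b) (affW a' b') =
      affW (b * a' + a' * b) (b * b' + b' * b) := by
  rw [hPr.sbrR_zero_affW]
  simp [affW]

theorem IsWProd.sbrR_affW_zero_zero_of_anticomm {b b' : An k n} (h : b' * b = -(b * b'))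
    (m : ℕ) : sbrR (Dm k n) Pr true true m (affW 0 b) (affW 0 b') = 0 := by
  rcases m with _ | _ | m
  · rw [hPr.sbrR_zero_affW_zero_left, h, add_neg_cancel]
    simp [affW]
  · rw [hPr.sbrR_one_affW]
    simp [affW]
  · exact hPr.sbrR_affW_of_two_le _ _ _ _ _ _ (by omega)

end W


theorem stmt_3_general (k : Type) [Field k] [CharZero k] (n : ℕ)
    (Pr : ℕ → Wc k n →ₗ[k] Wc k n →ₗ[k] Wc k n) (hPr : IsWProd k n Pr) :
    WRelsR (Dm k n) Pr (vmD k n) (fun i => vmD k n * xiW k n i) (paW k n) := by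
  have hX : (fun i => vmD k n * xiW k n i) = fun i => affW (xg k n i) 0 :=
    funext vmD_mul_xiW_eq_affW
  have hP : paW k n = fun j => affW 0 (dg k n j) := funext paW_eq_affW
  rw [hX, hP, vmD_eq_affW]
  refine ⟨fun i j => ?_, fun m i j => ?_, fun i j => ?_, fun i => hPr.sbrR_zero_vmD_affW _ _ _,
    fun i => hPr.sbrR_zero_affW_vmD _ _ _, fun i => ?_, fun j => ?_, fun j => ?_, fun i j => ?_,
    hPr.sbrR_zero_vmD_affW _ _ _, ?_, fun m hm => ?_⟩
  · rw [hPr.sbrR_zero_affW_of_anticomm (xg_mul_xg_comm i j),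
      hPr.sbrR_zero_affW_of_anticomm (xg_mul_xg_comm j i), xg_mul_xg_comm]
    simp [affW]
  · exact hPr.sbrR_affW_zero_zero_of_anticomm (dg_mul_dg_comm i j) m
  · rw [hPr.sbrR_zero_affW_zero_left, dg_mul_xg_add]
    split_ifs <;> simp_all [affW]
  · rw [hPr.sbrR_one_affW_vmD, two_smul]
  · rw [hPr.sbrR_zero_affW_vmD]
    simp [affW]
  · rw [hPr.sbrR_one_affW_vmD]
    simp [affW]
  · rw [hPr.sbrR_zero_affW_of_anticomm (xg_mul_xg_comm i j),
      hPr.sbrR_one_affW_of_anticomm (xg_mul_xg_comm i j), map_smul, smul_smul,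
      inv_mul_cancel₀ two_ne_zero, one_smul]
  · rw [hPr.sbrR_one_affW_vmD, two_smul]
  · refine ⟨?_, ?_, ?_, ?_, ?_⟩ <;> intros <;> exact hPr.sbrR_affW_of_two_le _ _ _ _ _ _ hm

/-- the elements `V = v - D`, `Xᵢ = (v - D)ξᵢ` (odd), `Pᵢ = ∂ᵢ` (odd)
of `W` satisfy the defining relations of `Wₙ` (i.e. `φ₁` is a homomorphism of Lie
conformal superalgebras `Wₙ → W⁽⁻⁾`). -/
theorem stmt_3 (k : Type) [Field k] [CharZero k] (n : ℕ) (hn : 1 ≤ n)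
    (Pr : ℕ → Wc k n →ₗ[k] Wc k n →ₗ[k] Wc k n) (hPr : IsWProd k n Pr) :
    WRelsR (Dm k n) Pr (vmD k n) (fun i => vmD k n * xiW k n i) (paW k n) :=
  stmt_3_general k n Pr hPr
end

section
/- In W = k[D] ⊗ Aₙ[v] (n ≥ 1), set V := v−D, Xᵢ := (v−D)ξᵢ, Pᵢ := ∂ᵢ. Then the induced locality function equals N₁, i.e.: N_W(V,V) = N_W(V,Xⱼ) = N_W(Xᵢ,V) = N_W(V,Pⱼ) = N_W(Xᵢ,Pⱼ) = 2 for all i,j; N_W(Xᵢ,Xⱼ) = 2 for i ≠ j and N_W(Xᵢ,Xᵢ) = 0; N_W(Pᵢ,V) = N_W(Pᵢ,Xⱼ) = 1 for all i,j; N_W(Pᵢ,Pⱼ) = 1 for i ≠ j and N_W(Pᵢ,Pᵢ) = 0. -/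
set_option maxSynthPendingDepth 5

/-! Each generator is of the form `(v - D)a + b` with `a, b ∈ Aₙ`
(`V = (v - D)·1`, `Xᵢ = (v - D)ξᵢ`, `Pᵢ = ∂ᵢ`). For such elements the products are
`x ∘₀ y = (va + b)·y`, `x ∘₁ y = a·y` and `x ∘ₘ y = 0` for `m ≥ 2`, because positive
products from `Aₙ[v]` kill `(v - D)c + d`. So `N_W(x, y)` is `2` when
`a·y ≠ 0`, `1` when `a = 0` and `b·y ≠ 0`, and `0` when both vanish; which case occurs is
decided in `Aₙ`, where nonvanishing is tested in the representation of `Aₙ` on the exterior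
algebra `Λ(kⁿ)` by wedging (`ξᵢ`) and contraction (`∂ᵢ`). -/

section ExteriorRep

variable (k : Type) [Field k] (n : ℕ)

noncomputable def exteriorGen (i : Fin n) : ExteriorAlgebra k (Fin n → k) :=
  ExteriorAlgebra.ι k (Pi.single i 1)

noncomputable def contraction (i : Fin n) :
    Module.End k (ExteriorAlgebra k (Fin n → k)) :=
  CliffordAlgebra.contractLeft (LinearMap.proj i)

noncomputable def exteriorRepGen : WGen n → Module.End k (ExteriorAlgebra k (Fin n → k))
  | .xi i => LinearMap.mulLeft k (exteriorGen k n i)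
  | .pa i => contraction k n i

variable {k n}

lemma contraction_exteriorGen_mul (i j : Fin n) (b : ExteriorAlgebra k (Fin n → k)) :
    contraction k n i (exteriorGen k n j * b)
      = (if i = j then (1 : k) else 0) • b - exteriorGen k n j * contraction k n i b := by
  rw [exteriorGen, contraction, CliffordAlgebra.contractLeft_ι_mul, LinearMap.proj_apply,
    Pi.single_apply]

lemma contraction_exteriorGen (i j : Fin n) :
    contraction k n i (exteriorGen k n j) = if i = j then 1 else 0 := by
  simpa [contraction, CliffordAlgebra.contractLeft_one, apply_ite] using
    contraction_exteriorGen_mul i j (1 : ExteriorAlgebra k (Fin n → k))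

lemma contraction_comm (i j : Fin n) (z : ExteriorAlgebra k (Fin n → k)) :
    contraction k n i (contraction k n j z) = -contraction k n j (contraction k n i z) :=
  CliffordAlgebra.contractLeft_comm _ _ _

lemma exteriorGen_ne_zero (i : Fin n) : exteriorGen k n i ≠ 0 := by
  rw [exteriorGen, Ne, ExteriorAlgebra.ι_eq_zero_iff]
  exact Pi.single_ne_zero_iff.mpr one_ne_zero

lemma exteriorGen_mul_ne_zero {i j : Fin n} (hij : i ≠ j) :
    exteriorGen k n i * exteriorGen k n j ≠ 0 := by
  intro h
  have h1 := congrArg (fun z => contraction k n j (contraction k n i z)) h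
  simp only [contraction_exteriorGen_mul, contraction_exteriorGen, if_neg hij, if_pos,
    one_smul, mul_zero, sub_zero, map_zero] at h1
  exact one_ne_zero h1

lemma exteriorRepGen_respects_rel ⦃x y : FreeAlgebra k (WGen n)⦄ (h : ARel k n x y) :
    FreeAlgebra.lift k (exteriorRepGen k n) x = FreeAlgebra.lift k (exteriorRepGen k n) y := by
  refine LinearMap.ext fun z => ?_
  cases h with
  | xixi i j =>
    simp only [map_add, map_mul, FreeAlgebra.lift_ι_apply, exteriorRepGen, LinearMap.add_apply,
      Module.End.mul_apply, LinearMap.mulLeft_apply, map_zero, LinearMap.zero_apply,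
      ← mul_assoc, ← add_mul, exteriorGen, ExteriorAlgebra.ι_add_mul_swap, zero_mul]
  | papa i j =>
    simp only [map_add, map_mul, FreeAlgebra.lift_ι_apply, exteriorRepGen, LinearMap.add_apply,
      Module.End.mul_apply, map_zero, LinearMap.zero_apply]
    rw [contraction_comm, neg_add_cancel]
  | paxi i j =>
    simp only [map_add, map_mul, FreeAlgebra.lift_ι_apply, exteriorRepGen, LinearMap.add_apply,
      Module.End.mul_apply, LinearMap.mulLeft_apply, contraction_exteriorGen_mul, sub_add_cancel]
    split_ifs <;> simp

variable (k n)

noncomputable def exteriorRep : An k n →ₐ[k] Module.End k (ExteriorAlgebra k (Fin n → k)) :=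
  RingQuot.liftAlgHom k ⟨FreeAlgebra.lift k (exteriorRepGen k n), exteriorRepGen_respects_rel⟩

variable {k n}

lemma exteriorRep_xg (i : Fin n) :
    exteriorRep k n (xg k n i) = LinearMap.mulLeft k (exteriorGen k n i) := by
  rw [xg, exteriorRep, RingQuot.liftAlgHom_mkAlgHom_apply, FreeAlgebra.lift_ι_apply,
    exteriorRepGen]

lemma exteriorRep_dg (i : Fin n) : exteriorRep k n (dg k n i) = contraction k n i := by
  rw [dg, exteriorRep, RingQuot.liftAlgHom_mkAlgHom_apply, FreeAlgebra.lift_ι_apply,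
    exteriorRepGen]

lemma ne_zero_of_exteriorRep_apply_ne_zero {a : An k n} (z : ExteriorAlgebra k (Fin n → k))
    (h : exteriorRep k n a z ≠ 0) : a ≠ 0 := by
  rintro rfl
  exact h (by rw [map_zero, LinearMap.zero_apply])

instance : Nontrivial (An k n) :=
  ⟨⟨1, 0, ne_zero_of_exteriorRep_apply_ne_zero 1 (by simp)⟩⟩

end ExteriorRep

section AnRelations

variable {k : Type} [Field k] {n : ℕ}

lemma xg_ne_zero (i : Fin n) : xg k n i ≠ 0 :=
  ne_zero_of_exteriorRep_apply_ne_zero 1 <| by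
    simpa [exteriorRep_xg] using exteriorGen_ne_zero i

lemma dg_ne_zero (i : Fin n) : dg k n i ≠ 0 :=
  ne_zero_of_exteriorRep_apply_ne_zero (exteriorGen k n i) <| by
    simp [exteriorRep_dg, contraction_exteriorGen]

lemma xg_mul_dg_ne_zero (i j : Fin n) : xg k n i * dg k n j ≠ 0 :=
  ne_zero_of_exteriorRep_apply_ne_zero (exteriorGen k n j) <| by
    simpa [exteriorRep_xg, exteriorRep_dg, contraction_exteriorGen] using exteriorGen_ne_zero i

lemma xg_mul_xg_ne_zero {i j : Fin n} (hij : i ≠ j) : xg k n i * xg k n j ≠ 0 :=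
  ne_zero_of_exteriorRep_apply_ne_zero 1 <| by
    simpa [exteriorRep_xg] using exteriorGen_mul_ne_zero hij

lemma dg_mul_xg_ne_zero (i j : Fin n) : dg k n i * xg k n j ≠ 0 := by
  by_cases hij : i = j
  · subst hij
    refine ne_zero_of_exteriorRep_apply_ne_zero 1 ?_
    simp [exteriorRep_xg, exteriorRep_dg, contraction_exteriorGen]
  · refine ne_zero_of_exteriorRep_apply_ne_zero (exteriorGen k n i) ?_
    simpa [exteriorRep_xg, exteriorRep_dg, contraction_exteriorGen_mul,
      contraction_exteriorGen, hij] using exteriorGen_ne_zero j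

lemma dg_mul_dg_ne_zero {i j : Fin n} (hij : i ≠ j) : dg k n i * dg k n j ≠ 0 :=
  ne_zero_of_exteriorRep_apply_ne_zero (exteriorGen k n j * exteriorGen k n i) <| by
    simp [exteriorRep_dg, contraction_exteriorGen_mul, contraction_exteriorGen, Ne.symm hij]

lemma xg_mul_self [NeZero (2 : k)] (i : Fin n) : xg k n i * xg k n i = 0 := by
  have h := RingQuot.mkAlgHom_rel k (ARel.xixi (k := k) (n := n) i i)
  rw [map_add, map_mul, map_zero, ← two_smul k] at h
  exact (smul_eq_zero.mp h).resolve_left two_ne_zero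

lemma dg_mul_self [NeZero (2 : k)] (i : Fin n) : dg k n i * dg k n i = 0 := by
  have h := RingQuot.mkAlgHom_rel k (ARel.papa (k := k) (n := n) i i)
  rw [map_add, map_mul, map_zero, ← two_smul k] at h
  exact (smul_eq_zero.mp h).resolve_left two_ne_zero

end AnRelations

section AffineInVMinusD

open Polynomial

variable (k : Type) [Field k] (n : ℕ)

noncomputable def constW : An k n →+* Wc k n := C.comp C

noncomputable def affVmD (a b : An k n) : Wc k n := vmD k n * constW k n a + constW k n b

variable {k n}

lemma affVmD_eq (a b : An k n) :
    affVmD k n a b = C (X * C a + C b) - X * C (C a) := by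
  simp only [affVmD, vmD, constW, RingHom.coe_comp, Function.comp_apply, map_add, map_mul]
  rw [sub_mul]
  abel

lemma constW_mul_affVmD (a c d : An k n) :
    constW k n a * affVmD k n c d = affVmD k n (a * c) (a * d) := by
  have hv : Commute (constW k n a) (vmD k n) := by
    refine Commute.sub_right ?_ (commute_X _).symm
    exact ((commute_X (C a)).symm.map C)
  simp only [affVmD, map_mul, mul_add, ← mul_assoc, hv.eq]

lemma affVmD_eq_zero_iff {a b : An k n} : affVmD k n a b = 0 ↔ a = 0 ∧ b = 0 := by
  refine ⟨fun h => ?_, by rintro ⟨rfl, rfl⟩; simp [affVmD]⟩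
  rw [affVmD_eq] at h
  have ha : a = 0 := by simpa using congrArg (coeff · 1) h
  subst ha
  simpa using h

@[simp]
lemma affVmD_zero_zero : affVmD k n 0 0 = 0 :=
  affVmD_eq_zero_iff.mpr ⟨rfl, rfl⟩

lemma vmD_eq_affVmD : vmD k n = affVmD k n 1 0 := by
  simp [affVmD]

lemma vmD_mul_xiW_eq_affVmD (i : Fin n) : vmD k n * xiW k n i = affVmD k n (xg k n i) 0 := by
  simp [affVmD, xiW, constW]

lemma paW_eq_affVmD (j : Fin n) : paW k n j = affVmD k n 0 (dg k n j) := by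
  simp [affVmD, paW, constW]

end AffineInVMinusD

section Products

open Polynomial

variable {k : Type} [Field k] {n : ℕ} {Pr : ℕ → Wc k n →ₗ[k] Wc k n →ₗ[k] Wc k n}
  (hPr : IsWProd k n Pr)
include hPr

lemma IsWProd.prod_C_C (m : ℕ) (f g : Av k n) :
    Pr m (C f) (C g) = C (f * derivative^[m] g) :=
  hPr.1 m f g

lemma IsWProd.prod_X_mul (m : ℕ) (a b : Wc k n) :
    Pr m (X * a) b = -(m : k) • Pr (m - 1) a b :=
  hPr.2.1 m a b

lemma IsWProd.prod_C_X_mul (m : ℕ) (f g : Av k n) :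
    Pr m (C f) (X * C g)
      = X * C (f * derivative^[m] g) + (m : k) • C (f * derivative^[m - 1] g) := by
  rw [← hPr.prod_C_C, ← hPr.prod_C_C]
  exact hPr.2.2 m (C f) (C g)

lemma IsWProd.prod_zero_C_affVmD (f : Av k n) (c d : An k n) :
    Pr 0 (C f) (affVmD k n c d) = C f * affVmD k n c d := by
  rw [affVmD_eq, map_sub, hPr.prod_C_C, hPr.prod_C_X_mul]
  simp only [Function.iterate_zero, id_eq, Nat.cast_zero, zero_smul, add_zero, mul_sub,
    map_mul, ← mul_assoc, (commute_X (C f)).eq]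

/-- The `v`-derivative of `(v - D)c` is cancelled by the `D`-term of (C3). -/
lemma IsWProd.prod_C_affVmD_of_ne_zero {m : ℕ} (hm : m ≠ 0) (f : Av k n) (c d : An k n) :
    Pr m (C f) (affVmD k n c d) = 0 := by
  obtain ⟨m, rfl⟩ := Nat.exists_eq_add_one_of_ne_zero hm
  have hderiv : derivative (X * C c + C d) = C c := by simp
  rw [affVmD_eq, map_sub, hPr.prod_C_C, hPr.prod_C_X_mul, Function.iterate_succ_apply, hderiv,
    Function.iterate_succ_apply, derivative_C, iterate_map_zero, Nat.add_sub_cancel]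
  rcases m with _ | m
  · simp
  · simp [iterate_derivative_C]

lemma IsWProd.prod_affVmD (m : ℕ) (a b : An k n) (y : Wc k n) :
    Pr m (affVmD k n a b) y = Pr m (C (X * C a + C b)) y + (m : k) • Pr (m - 1) (C (C a)) y := by
  rw [affVmD_eq, map_sub, LinearMap.sub_apply, hPr.prod_X_mul, neg_smul, sub_neg_eq_add]

lemma IsWProd.prod_zero_affVmD (a b c d : An k n) :
    Pr 0 (affVmD k n a b) (affVmD k n c d)
      = vW k n * affVmD k n (a * c) (a * d) + affVmD k n (b * c) (b * d) := by
  rw [hPr.prod_affVmD, Nat.cast_zero, zero_smul, add_zero, hPr.prod_zero_C_affVmD,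
    ← constW_mul_affVmD, ← constW_mul_affVmD]
  simp only [constW, vW, RingHom.coe_comp, Function.comp_apply, map_add, map_mul, add_mul,
    mul_assoc]

lemma IsWProd.prod_one_affVmD (a b c d : An k n) :
    Pr 1 (affVmD k n a b) (affVmD k n c d) = affVmD k n (a * c) (a * d) := by
  rw [hPr.prod_affVmD, hPr.prod_C_affVmD_of_ne_zero one_ne_zero, Nat.cast_one, one_smul,
    zero_add, Nat.sub_self, hPr.prod_zero_C_affVmD, ← constW_mul_affVmD]
  rfl

lemma IsWProd.prod_affVmD_of_two_le {m : ℕ} (hm : 2 ≤ m) (a b c d : An k n) :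
    Pr m (affVmD k n a b) (affVmD k n c d) = 0 := by
  rw [hPr.prod_affVmD, hPr.prod_C_affVmD_of_ne_zero (by omega),
    hPr.prod_C_affVmD_of_ne_zero (by omega), smul_zero, add_zero]

end Products

section Locality

variable {k : Type} [Field k] {n : ℕ} {Pr : ℕ → Wc k n →ₗ[k] Wc k n →ₗ[k] Wc k n}

lemma locNW_eq_succ {x y : Wc k n} {N : ℕ} (hvan : ∀ m, N < m → Pr m x y = 0)
    (hne : Pr N x y ≠ 0) : locNW k n Pr x y = N + 1 :=
  le_antisymm (Nat.sInf_le hvan) <| le_csInf ⟨N + 1, hvan⟩ fun M hM => by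
    by_contra! h
    exact hne (hM N (by omega))

lemma locNW_eq_zero {x y : Wc k n} (hvan : ∀ m, Pr m x y = 0) : locNW k n Pr x y = 0 :=
  Nat.sInf_eq_zero.mpr (Or.inl fun m _ => hvan m)

variable (hPr : IsWProd k n Pr)
include hPr

lemma IsWProd.locNW_affVmD_eq_two {a b c d : An k n} (h : a * c ≠ 0 ∨ a * d ≠ 0) :
    locNW k n Pr (affVmD k n a b) (affVmD k n c d) = 2 :=
  locNW_eq_succ (fun _ hm => hPr.prod_affVmD_of_two_le hm a b c d) <| by
    rw [hPr.prod_one_affVmD, Ne, affVmD_eq_zero_iff]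
    tauto

lemma IsWProd.locNW_affVmD_zero_left_eq_one {b c d : An k n} (h : b * c ≠ 0 ∨ b * d ≠ 0) :
    locNW k n Pr (affVmD k n 0 b) (affVmD k n c d) = 1 := by
  refine locNW_eq_succ (fun m hm => ?_) ?_
  · rcases Nat.lt_or_ge 1 m with hm2 | hm1
    · exact hPr.prod_affVmD_of_two_le hm2 0 b c d
    · rw [show m = 1 by omega, hPr.prod_one_affVmD, zero_mul, zero_mul, affVmD_zero_zero]
  · rw [hPr.prod_zero_affVmD, zero_mul, zero_mul, affVmD_zero_zero, mul_zero, zero_add, Ne,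
      affVmD_eq_zero_iff]
    tauto

lemma IsWProd.locNW_affVmD_eq_zero {a b c d : An k n} (hac : a * c = 0) (had : a * d = 0)
    (hbc : b * c = 0) (hbd : b * d = 0) :
    locNW k n Pr (affVmD k n a b) (affVmD k n c d) = 0 := by
  refine locNW_eq_zero fun m => ?_
  match m with
  | 0 => rw [hPr.prod_zero_affVmD, hac, had, hbc, hbd, affVmD_zero_zero, mul_zero, add_zero]
  | 1 => rw [hPr.prod_one_affVmD, hac, had, affVmD_zero_zero]
  | m + 2 => exact hPr.prod_affVmD_of_two_le (by omega) a b c d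

end Locality

theorem stmt_5_general (k : Type) [Field k] [CharZero k] (n : ℕ)
    (Pr : ℕ → Wc k n →ₗ[k] Wc k n →ₗ[k] Wc k n) (hPr : IsWProd k n Pr) :
    locNW k n Pr (vmD k n) (vmD k n) = 2 ∧
    (∀ j, locNW k n Pr (vmD k n) (vmD k n * xiW k n j) = 2) ∧
    (∀ i, locNW k n Pr (vmD k n * xiW k n i) (vmD k n) = 2) ∧
    (∀ j, locNW k n Pr (vmD k n) (paW k n j) = 2) ∧
    (∀ i j, locNW k n Pr (vmD k n * xiW k n i) (paW k n j) = 2) ∧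
    (∀ i j, i ≠ j → locNW k n Pr (vmD k n * xiW k n i) (vmD k n * xiW k n j) = 2) ∧
    (∀ i, locNW k n Pr (vmD k n * xiW k n i) (vmD k n * xiW k n i) = 0) ∧
    (∀ i, locNW k n Pr (paW k n i) (vmD k n) = 1) ∧
    (∀ i j, locNW k n Pr (paW k n i) (vmD k n * xiW k n j) = 1) ∧
    (∀ i j, i ≠ j → locNW k n Pr (paW k n i) (paW k n j) = 1) ∧
    (∀ i, locNW k n Pr (paW k n i) (paW k n i) = 0) := by
  simp only [vmD_mul_xiW_eq_affVmD, paW_eq_affVmD]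
  simp only [vmD_eq_affVmD]
  refine ⟨hPr.locNW_affVmD_eq_two (by simp),
    fun j => hPr.locNW_affVmD_eq_two (by simp [xg_ne_zero]),
    fun i => hPr.locNW_affVmD_eq_two (by simp [xg_ne_zero]),
    fun j => hPr.locNW_affVmD_eq_two (by simp [dg_ne_zero]),
    fun i j => hPr.locNW_affVmD_eq_two (Or.inr (xg_mul_dg_ne_zero i j)),
    fun i j hij => hPr.locNW_affVmD_eq_two (Or.inl (xg_mul_xg_ne_zero hij)),
    fun i => hPr.locNW_affVmD_eq_zero (xg_mul_self i) (mul_zero _) (zero_mul _) (zero_mul _),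
    fun i => hPr.locNW_affVmD_zero_left_eq_one (by simp [dg_ne_zero]),
    fun i j => hPr.locNW_affVmD_zero_left_eq_one (Or.inl (dg_mul_xg_ne_zero i j)),
    fun i j hij => hPr.locNW_affVmD_zero_left_eq_one (Or.inr (dg_mul_dg_ne_zero hij)),
    fun i => hPr.locNW_affVmD_eq_zero (zero_mul _) (zero_mul _) (mul_zero _) (dg_mul_self i)⟩

/-- the locality function induced by `φ₁` on the generators equals `N₁`. -/
theorem stmt_5 (k : Type) [Field k] [CharZero k] (n : ℕ) (hn : 1 ≤ n)
    (Pr : ℕ → Wc k n →ₗ[k] Wc k n →ₗ[k] Wc k n) (hPr : IsWProd k n Pr) :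
    locNW k n Pr (vmD k n) (vmD k n) = 2 ∧
    (∀ j, locNW k n Pr (vmD k n) (vmD k n * xiW k n j) = 2) ∧
    (∀ i, locNW k n Pr (vmD k n * xiW k n i) (vmD k n) = 2) ∧
    (∀ j, locNW k n Pr (vmD k n) (paW k n j) = 2) ∧
    (∀ i j, locNW k n Pr (vmD k n * xiW k n i) (paW k n j) = 2) ∧
    (∀ i j, i ≠ j → locNW k n Pr (vmD k n * xiW k n i) (vmD k n * xiW k n j) = 2) ∧
    (∀ i, locNW k n Pr (vmD k n * xiW k n i) (vmD k n * xiW k n i) = 0) ∧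
    (∀ i, locNW k n Pr (paW k n i) (vmD k n) = 1) ∧
    (∀ i j, locNW k n Pr (paW k n i) (vmD k n * xiW k n j) = 1) ∧
    (∀ i j, i ≠ j → locNW k n Pr (paW k n i) (paW k n j) = 1) ∧
    (∀ i, locNW k n Pr (paW k n i) (paW k n i) = 0) :=
  stmt_5_general k n Pr hPr
end

section
/- Let A be an associative conformal algebra containing elements v, ξ₁,…,ξₙ, ∂₁,…,∂ₙ such that x∘ₘy = 0 whenever m ≥ N₂(x,y) (with N₂ the locality table below), and satisfying: ∂ᵢ∘₀ξⱼ + ξⱼ∘₀∂ᵢ = δᵢⱼ·v; 2(ξᵢ∘₀ξⱼ + ξⱼ∘₀ξᵢ) = D(ξᵢ∘₁ξⱼ + ξⱼ∘₁ξᵢ) for i ≠ j; ∂ᵢ∘₀∂ⱼ + ∂ⱼ∘₀∂ᵢ = 0 for i ≠ j; v∘₀ξᵢ − ξᵢ∘₀v + D(ξᵢ∘₁v) = Dξᵢ; ξᵢ∘₀v − v∘₀ξᵢ + D(v∘₁ξᵢ) = Dξᵢ; ξᵢ∘₁v + v∘₁ξᵢ = 2ξᵢ; ∂ᵢ∘₀v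 − v∘₀∂ᵢ = 0; ∂ᵢ∘₁v = ∂ᵢ; v∘₁v = v. Then the following relations also hold: ξᵢ∘₀ξⱼ = −ξⱼ∘₀ξᵢ and ξᵢ∘₁ξⱼ = −ξⱼ∘₁ξᵢ for all i,j; v∘₀ξᵢ = ξᵢ∘₀v; ξᵢ∘₁v = ξᵢ; v∘₁ξᵢ = ξᵢ; ξᵢ∘₁(ξⱼ∘₀ξₗ) = 2·ξᵢ∘₀(ξⱼ∘₁ξₗ) for i < j < l; ξᵢ∘₁(ξⱼ∘₀v) = 2·ξᵢ∘₀ξⱼ for i < j; ∂ᵢ∘₁(ξⱼ∘₀v) = 2·∂ᵢ∘₀ξⱼ for all i,j; ∂ₗ∘₁(ξᵢ∘₀ξⱼ) = 2·∂ₗ∘₀(ξᵢ∘₁ξⱼ) for i < j and all l. -/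
section Aux
variable {k : Type} [Field k] {C : Type} [AddCommGroup C] [Module k C]

lemma assoc0 (A : ConfAlg k C) (hA : A.IsAssoc) (m : ℕ) (a b c : C) :
    A.prod m (A.prod 0 a b) c = A.prod 0 a (A.prod m b c) := by
  have h := hA 0 m a b c
  simpa using h

lemma assoc1 (A : ConfAlg k C) (hA : A.IsAssoc) (m : ℕ) (a b c : C) :
    A.prod 1 a (A.prod m b c)
      = A.prod m (A.prod 1 a b) c + A.prod 0 a (A.prod (m+1) b c) := by
  have h := hA 1 m a b c
  simp [Finset.sum_range_succ] at h
  rw [h]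
  abel

lemma assoc2 (A : ConfAlg k C) (hA : A.IsAssoc) (m : ℕ) (a b c : C) :
    A.prod 2 a (A.prod m b c)
      = A.prod m (A.prod 2 a b) c + (2:k) • A.prod (m+1) (A.prod 1 a b) c
        + A.prod (m+2) (A.prod 0 a b) c := by
  have h := hA 2 m a b c
  simp [Finset.sum_range_succ] at h
  have h1 := assoc1 A hA (m+1) a b c
  have h0 := assoc0 A hA (m+2) a b c
  rw [h1, show m+1+1 = m+2 from rfl] at h
  rw [h0, h]
  module

end Aux

/-- in any associative conformal algebra containing elements
`v, ξ₁,…,ξₙ, ∂₁,…,∂ₙ` with locality bounded by `N₂` and satisfying the defining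
relations (eq-2-1)–(eq-2-8), the relations (eq-A-1)–(eq-A-6) also hold. -/
theorem stmt_8 {k : Type} [Field k] [CharZero k] {C : Type} [AddCommGroup C] [Module k C]
    (A : ConfAlg k C) (hA : A.IsAssoc) (n : ℕ) (v : C) (ξ pd : Fin n → C)
    -- locality bounds given by the table N₂
    (loc_vv : ∀ m, 2 ≤ m → A.prod m v v = 0)
    (loc_vξ : ∀ m, 2 ≤ m → ∀ j, A.prod m v (ξ j) = 0)
    (loc_ξv : ∀ m, 2 ≤ m → ∀ i, A.prod m (ξ i) v = 0)
    (loc_pv : ∀ m, 2 ≤ m → ∀ i, A.prod m (pd i) v = 0)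
    (loc_pξ : ∀ m, 2 ≤ m → ∀ i j, A.prod m (pd i) (ξ j) = 0)
    (loc_ξξ : ∀ m, 2 ≤ m → ∀ i j, i ≠ j → A.prod m (ξ i) (ξ j) = 0)
    (loc_ξξ0 : ∀ (m : ℕ) (i), A.prod m (ξ i) (ξ i) = 0)
    (loc_vp : ∀ m, 1 ≤ m → ∀ j, A.prod m v (pd j) = 0)
    (loc_ξp : ∀ m, 1 ≤ m → ∀ i j, A.prod m (ξ i) (pd j) = 0)
    (loc_pp : ∀ m, 1 ≤ m → ∀ i j, i ≠ j → A.prod m (pd i) (pd j) = 0)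
    (loc_pp0 : ∀ (m : ℕ) (i), A.prod m (pd i) (pd i) = 0)
    -- the defining relations
    (r1 : ∀ i j, A.prod 0 (pd i) (ξ j) + A.prod 0 (ξ j) (pd i) = if i = j then v else 0)
    (r2 : ∀ i j, i ≠ j →
        (2 : k) • (A.prod 0 (ξ i) (ξ j) + A.prod 0 (ξ j) (ξ i))
          = A.Dmap (A.prod 1 (ξ i) (ξ j) + A.prod 1 (ξ j) (ξ i)))
    (r3 : ∀ i j, i ≠ j → A.prod 0 (pd i) (pd j) + A.prod 0 (pd j) (pd i) = 0)
    (r4 : ∀ i, A.prod 0 v (ξ i) - A.prod 0 (ξ i) v + A.Dmap (A.prod 1 (ξ i) v)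
        = A.Dmap (ξ i))
    (r5 : ∀ i, A.prod 0 (ξ i) v - A.prod 0 v (ξ i) + A.Dmap (A.prod 1 v (ξ i))
        = A.Dmap (ξ i))
    (r6 : ∀ i, A.prod 1 (ξ i) v + A.prod 1 v (ξ i) = (2 : k) • ξ i)
    (r7 : ∀ i, A.prod 0 (pd i) v - A.prod 0 v (pd i) = 0)
    (r8 : ∀ i, A.prod 1 (pd i) v = pd i)
    (r9 : A.prod 1 v v = v) :
    -- the derived relations
    (∀ i j, A.prod 0 (ξ i) (ξ j) = - A.prod 0 (ξ j) (ξ i)) ∧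
    (∀ i j, A.prod 1 (ξ i) (ξ j) = - A.prod 1 (ξ j) (ξ i)) ∧
    (∀ i, A.prod 0 v (ξ i) = A.prod 0 (ξ i) v) ∧
    (∀ i, A.prod 1 (ξ i) v = ξ i) ∧
    (∀ i, A.prod 1 v (ξ i) = ξ i) ∧
    (∀ i j l, i < j → j < l →
        A.prod 1 (ξ i) (A.prod 0 (ξ j) (ξ l))
          = (2 : k) • A.prod 0 (ξ i) (A.prod 1 (ξ j) (ξ l))) ∧
    (∀ i j, i < j →
        A.prod 1 (ξ i) (A.prod 0 (ξ j) v) = (2 : k) • A.prod 0 (ξ i) (ξ j)) ∧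
    (∀ i j, A.prod 1 (pd i) (A.prod 0 (ξ j) v) = (2 : k) • A.prod 0 (pd i) (ξ j)) ∧
    (∀ l i j, i < j →
        A.prod 1 (pd l) (A.prod 0 (ξ i) (ξ j))
          = (2 : k) • A.prod 0 (pd l) (A.prod 1 (ξ i) (ξ j))) := by
  have a0 := assoc0 A hA
  have a1 := assoc1 A hA
  have a2 := assoc2 A hA
  have h2k : (2:k) ≠ 0 := by norm_num
  -- ξᵢ∘₁v = v∘₁ξᵢ
  have hbB : ∀ i, A.prod 1 (ξ i) v = A.prod 1 v (ξ i) := by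
    intro i
    have hv : A.prod 0 (pd i) (ξ i) + A.prod 0 (ξ i) (pd i) = v := by
      simpa using r1 i i
    have hB : A.prod 1 v (ξ i) = A.prod 0 (ξ i) (A.prod 1 (pd i) (ξ i)) := by
      rw [← hv, map_add, LinearMap.add_apply, a0 1 (pd i) (ξ i) (ξ i),
        a0 1 (ξ i) (pd i) (ξ i), loc_ξξ0 1 i]
      simp
    have hb : A.prod 1 (ξ i) v = A.prod 0 (ξ i) (A.prod 1 (pd i) (ξ i)) := by
      rw [← hv, map_add, a1 0 (ξ i) (pd i) (ξ i), a1 0 (ξ i) (ξ i) (pd i)]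
      simp only [Nat.reduceAdd, Nat.zero_add]
      rw [loc_ξp 1 le_rfl i i, loc_ξξ0 1 i]
      simp
    rw [hB, hb]
  have hxi : ∀ i, A.prod 1 (ξ i) v = ξ i := by
    intro i
    have h6 := r6 i
    rw [← hbB i, ← two_smul k] at h6
    exact smul_right_injective C h2k h6
  have hvxi : ∀ i, A.prod 1 v (ξ i) = ξ i := by
    intro i; rw [← hbB i]; exact hxi i
  have hv0 : ∀ i, A.prod 0 v (ξ i) = A.prod 0 (ξ i) v := by
    intro i
    have h := r4 i
    rw [hxi i] at h
    exact sub_eq_zero.mp (add_eq_right.mp h)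
  -- key computations with v ∘₂
  have e1 : ∀ i j, i ≠ j → A.prod 2 v (A.prod 0 (ξ i) (ξ j))
      = (2:k) • A.prod 1 (ξ i) (ξ j) := by
    intro i j hij
    rw [a2 0 v (ξ i) (ξ j)]
    simp only [Nat.reduceAdd, Nat.zero_add]
    rw [loc_vξ 2 le_rfl i, hvxi i, a0 2 v (ξ i) (ξ j), loc_ξξ 2 le_rfl i j hij]
    simp
  have e2 : ∀ i j, i ≠ j → A.prod 2 v (A.prod 1 (ξ i) (ξ j)) = 0 := by
    intro i j hij
    rw [a2 1 v (ξ i) (ξ j)]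
    simp only [Nat.reduceAdd]
    rw [loc_vξ 2 le_rfl i, hvxi i, loc_ξξ 2 le_rfl i j hij,
      a0 3 v (ξ i) (ξ j), loc_ξξ 3 (by norm_num) i j hij]
    simp
  have e3 : ∀ i j, i ≠ j → A.prod 1 v (A.prod 1 (ξ i) (ξ j))
      = A.prod 1 (ξ i) (ξ j) := by
    intro i j hij
    rw [a1 1 v (ξ i) (ξ j)]
    simp only [Nat.reduceAdd]
    rw [hvxi i, loc_ξξ 2 le_rfl i j hij]
    simp
  have hS1 : ∀ i j, i ≠ j →
      A.prod 1 (ξ i) (ξ j) + A.prod 1 (ξ j) (ξ i) = 0 := by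
    intro i j hij
    have hc : A.prod 2 v ((2:k) • (A.prod 0 (ξ i) (ξ j) + A.prod 0 (ξ j) (ξ i)))
        = A.prod 2 v (A.Dmap (A.prod 1 (ξ i) (ξ j) + A.prod 1 (ξ j) (ξ i))) := by
      rw [r2 i j hij]
    simp only [map_smul, map_add] at hc
    rw [e1 i j hij, e1 j i hij.symm, A.axC3 2 v (A.prod 1 (ξ i) (ξ j)),
      A.axC3 2 v (A.prod 1 (ξ j) (ξ i))] at hc
    simp only [Nat.reduceSub] at hc
    rw [e2 i j hij, e2 j i hij.symm, e3 i j hij, e3 j i hij.symm] at hc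
    simp only [map_zero, zero_add] at hc
    have h2 : (2:k) • (A.prod 1 (ξ i) (ξ j) + A.prod 1 (ξ j) (ξ i)) = (2:k) • (0:C) := by
      rw [smul_zero]
      linear_combination (norm := module) hc
    exact smul_right_injective C h2k h2
  have hskew1 : ∀ i j, A.prod 1 (ξ i) (ξ j) = - A.prod 1 (ξ j) (ξ i) := by
    intro i j
    by_cases hij : i = j
    · subst hij; rw [loc_ξξ0]; simp
    · exact eq_neg_of_add_eq_zero_left (hS1 i j hij)
  have hskew0 : ∀ i j, A.prod 0 (ξ i) (ξ j) = - A.prod 0 (ξ j) (ξ i) := by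
    intro i j
    by_cases hij : i = j
    · subst hij; rw [loc_ξξ0]; simp
    · have h := r2 i j hij
      rw [hS1 i j hij, map_zero] at h
      have h2 : (2:k) • (A.prod 0 (ξ i) (ξ j) + A.prod 0 (ξ j) (ξ i)) = (2:k) • (0:C) := by
        rw [smul_zero]; exact h
      exact eq_neg_of_add_eq_zero_left (smul_right_injective C h2k h2)
  -- (7) and (8)
  have t7 : ∀ i j, A.prod 1 (ξ i) (A.prod 0 (ξ j) v) = (2:k) • A.prod 0 (ξ i) (ξ j) := by
    intro i j
    rw [← hv0 j, a1 0 (ξ i) v (ξ j)]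
    simp only [Nat.reduceAdd, Nat.zero_add]
    rw [hxi i, hvxi j, two_smul]
  have t8 : ∀ i j, A.prod 1 (pd i) (A.prod 0 (ξ j) v) = (2:k) • A.prod 0 (pd i) (ξ j) := by
    intro i j
    rw [← hv0 j, a1 0 (pd i) v (ξ j)]
    simp only [Nat.reduceAdd, Nat.zero_add]
    rw [r8 i, hvxi j, two_smul]
  -- (9)
  have t9 : ∀ l i j, A.prod 1 (pd l) (A.prod 0 (ξ i) (ξ j))
      = (2:k) • A.prod 0 (pd l) (A.prod 1 (ξ i) (ξ j)) := by
    intro l i j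
    have hrepr : A.prod 0 (ξ i) (ξ j) = A.prod 1 (A.prod 0 (ξ i) v) (ξ j) := by
      rw [a0 1 (ξ i) v (ξ j), hvxi j]
    rw [hrepr, a1 1 (pd l) (A.prod 0 (ξ i) v) (ξ j), t8 l i]
    simp only [Nat.reduceAdd]
    rw [a0 2 (ξ i) v (ξ j), loc_vξ 2 le_rfl j]
    simp only [map_zero, map_smul, LinearMap.smul_apply, add_zero]
    rw [a0 1 (pd l) (ξ i) (ξ j)]
  -- (6)
  have t6 : ∀ i j l, A.prod 1 (ξ i) (A.prod 0 (ξ j) (ξ l))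
      = (2:k) • A.prod 0 (ξ i) (A.prod 1 (ξ j) (ξ l)) := by
    intro i j l
    have hrepr : A.prod 0 (ξ j) (ξ l) = A.prod 1 (A.prod 0 (ξ j) v) (ξ l) := by
      rw [a0 1 (ξ j) v (ξ l), hvxi l]
    rw [hrepr, a1 1 (ξ i) (A.prod 0 (ξ j) v) (ξ l), t7 i j]
    simp only [Nat.reduceAdd]
    rw [a0 2 (ξ j) v (ξ l), loc_vξ 2 le_rfl l]
    simp only [map_zero, map_smul, LinearMap.smul_apply, add_zero]
    rw [a0 1 (ξ i) (ξ j) (ξ l)]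
  exact ⟨hskew0, hskew1, hv0, hxi, hvxi, fun i j l _ _ => t6 i j l,
    fun i j _ => t7 i j, t8, fun l i j _ => t9 l i j⟩
end

section
/- Let n ≥ 1, n ≠ 2. Then the smallest D-invariant k-subspace of W = k[D] ⊗ Aₙ[v] closed under all products ∘ₙ and containing {ψ₂(g_I) : I ⊆ {1,…,n}} is equal to C₂. (That is, (C₂, ψ₂) is an associative envelope of the conformal superalgebra Kₙ for n ≠ 2.) -/
set_option maxSynthPendingDepth 5

/-! ### The elements `ξ_I`, `∂ᵢ(ξ_I)` and `ψ₁(g_I)`, `ψ₂(g_I)` -/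

/-- `ξ_I = ξ_{i₁} ⋯ ξ_{i_r} ∈ Aₙ` for `I = {i₁ < … < i_r}` (`ξ_∅ = 1`). -/
noncomputable def xiI (k : Type) [Field k] (n : ℕ) (I : Finset (Fin n)) : An k n :=
  ((I.sort (· ≤ ·)).map (xg k n)).prod

/-- `∂_J = ∂_{j₁} ⋯ ∂_{j_q} ∈ Aₙ` for `J = {j₁ < … < j_q}` (`∂_∅ = 1`). -/
noncomputable def dgJ (k : Type) [Field k] (n : ℕ) (J : Finset (Fin n)) : An k n :=
  ((J.sort (· ≤ ·)).map (dg k n)).prod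

/-- `∂ᵢ(ξ_I) = (-1)^{t-1} ξ_{I∖{i}}` if `i` is the `t`-th element of `I`, else `0`. -/
noncomputable def dxi (k : Type) [Field k] (n : ℕ) (i : Fin n) (I : Finset (Fin n)) :
    An k n :=
  if i ∈ I then ((-1 : k) ^ (I.filter (fun j => j < i)).card) • xiI k n (I.erase i)
  else 0

/-- The embedding `a ↦ 1 ⊗ a : Aₙ → W`. -/
noncomputable def embA (k : Type) [Field k] (n : ℕ) (a : An k n) : Wc k n :=
  Polynomial.C (Polynomial.C a)

/-- The map `a ↦ D ⊗ a : Aₙ → W`. -/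
noncomputable def embD (k : Type) [Field k] (n : ℕ) (a : An k n) : Wc k n :=
  Polynomial.monomial 1 (Polynomial.C a)

/-- `ψ₁(g_I) = (2-|I|)(v-D)ξ_I + (-1)^{|I|} ∑ᵢ (D ⊗ ξᵢξ_I∂ᵢ + 1 ⊗ ∂ᵢ(ξ_I)∂ᵢ)`. -/
noncomputable def ψ1 (k : Type) [Field k] (n : ℕ) (I : Finset (Fin n)) : Wc k n :=
  ((2 : k) - (I.card : k)) • (vmD k n * embA k n (xiI k n I))
    + ((-1 : k) ^ I.card) •
      ∑ i : Fin n,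
        (embD k n (xg k n i * xiI k n I * dg k n i) + embA k n (dxi k n i I * dg k n i))

/-- `ψ₂(g_I) = (2-|I|)·vξ_I - ∑ᵢ (D ⊗ ∂ᵢξᵢξ_I + 1 ⊗ ∂ᵢ·∂ᵢ(ξ_I))`. -/
noncomputable def ψ2 (k : Type) [Field k] (n : ℕ) (I : Finset (Fin n)) : Wc k n :=
  ((2 : k) - (I.card : k)) • (vW k n * embA k n (xiI k n I))
    - ∑ i : Fin n,
        (embD k n (dg k n i * xg k n i * xiI k n I) + embA k n (dg k n i * dxi k n i I))

/-!
All `ψ₂(g_I)` with `|I| ≤ 2` have the form `1 ⊗ f + D ⊗ g` with `f, g ∈ Aₙ[v]`, and on such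
elements `∘₀` and `∘₁` are explicit. Using only the anticommutation relations of `Aₙ` and
`c = ∑ⱼ ∂ⱼξⱼ`, suitable combinations of `∘₀`- and `∘₁`-products of `ψ₂(g_∅)`, `ψ₂(g_{j})` and
`ψ₂(g_{i,j})` equal `(n - 2)·v`, `(n - 2)·vξᵢ` and `(n - 2)·∂ᵢ`; dividing by `n - 2` puts the
generators of `C₂` into the closure of the `ψ₂(g_I)`. Conversely every summand of `ψ₂(g_I)` lies
in `C₂`, since `vξ_J` is an iterated `∘₁`-product of the `vξⱼ` with `v`, and `∂ᵢξ_J = ∂ᵢ ∘₁ vξ_J`.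
-/

open Polynomial

structure IsCAR {R ι : Type*} [Ring R] [DecidableEq ι] (x d : ι → R) : Prop where
  x_anticomm : ∀ i j, x i * x j + x j * x i = 0
  d_anticomm : ∀ i j, d i * d j + d j * d i = 0
  d_x_anticomm : ∀ i j, d i * x j + x j * d i = if i = j then 1 else 0

def dxSum {R ι : Type*} [Ring R] [Fintype ι] (x d : ι → R) : R := ∑ i, d i * x i

def dxSkew {R ι : Type*} [Ring R] (x d : ι → R) (i j : ι) : R := d i * x j - d j * x i

namespace IsCAR

variable {R ι : Type*} [Ring R] [DecidableEq ι] {x d : ι → R} (h : IsCAR x d)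
include h

lemma x_mul_x (i j : ι) : x i * x j = -(x j * x i) :=
  eq_neg_of_add_eq_zero_left (h.x_anticomm i j)

lemma d_mul_d (i j : ι) : d i * d j = -(d j * d i) :=
  eq_neg_of_add_eq_zero_left (h.d_anticomm i j)

lemma x_mul_d (i j : ι) : x j * d i = (if i = j then 1 else 0) - d i * x j := by
  rw [← h.d_x_anticomm, add_sub_cancel_left]

lemma d_mul_x (i j : ι) : d i * x j = (if i = j then 1 else 0) - x j * d i := by
  rw [← h.d_x_anticomm, add_sub_cancel_right]

lemma x_mul_d_self (i : ι) : x i * d i = 1 - d i * x i := by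
  simpa using h.x_mul_d i i

section TorsionFree

variable [IsAddTorsionFree R]

lemma x_mul_self (i : ι) : x i * x i = 0 :=
  nsmul_right_injective two_ne_zero <|
    show 2 • (x i * x i) = 2 • 0 by rw [two_nsmul, h.x_anticomm, smul_zero]

lemma d_mul_self (i : ι) : d i * d i = 0 :=
  nsmul_right_injective two_ne_zero <|
    show 2 • (d i * d i) = 2 • 0 by rw [two_nsmul, h.d_anticomm, smul_zero]

lemma x_mul_x_mul_x (i j : ι) : x j * (x i * x j) = 0 := by
  rw [← mul_assoc, h.x_mul_x j i, neg_mul, mul_assoc, h.x_mul_self, mul_zero, neg_zero]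

lemma x_mul_d_mul_x (i j : ι) : x j * (d i * x j) = if i = j then x j else 0 := by
  rw [← mul_assoc, h.x_mul_d, sub_mul, mul_assoc, h.x_mul_self, mul_zero, sub_zero, ite_mul,
    one_mul, zero_mul]

lemma d_mul_x_mul_d (i j : ι) : d j * (x i * d j) = if i = j then d j else 0 := by
  rw [h.x_mul_d, mul_sub, mul_ite, mul_one, mul_zero, ← mul_assoc, h.d_mul_self, zero_mul,
    sub_zero]
  simp only [eq_comm]

end TorsionFree

variable [Fintype ι]

lemma x_mul_dxSum (j : ι) : x j * dxSum x d = dxSum x d * x j + x j := by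
  have key (i : ι) : x j * (d i * x i) = d i * x i * x j + if i = j then x i else 0 := by
    rw [← mul_assoc, h.x_mul_d, sub_mul, ite_mul, one_mul, zero_mul, mul_assoc, h.x_mul_x j i,
      mul_neg, sub_neg_eq_add, ← mul_assoc, add_comm]
  simp only [dxSum, Finset.mul_sum, Finset.sum_mul, key, Finset.sum_add_distrib,
    Finset.sum_ite_eq', Finset.mem_univ, if_true]

lemma dxSum_mul_d (i : ι) : dxSum x d * d i = d i + d i * dxSum x d := by
  have key (j : ι) : d j * x j * d i = (if i = j then d j else 0) + d i * (d j * x j) := by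
    rw [mul_assoc, h.x_mul_d, mul_sub, mul_ite, mul_one, mul_zero, ← mul_assoc, h.d_mul_d j i,
      neg_mul, sub_neg_eq_add, mul_assoc]
  simp only [dxSum, Finset.mul_sum, Finset.sum_mul, key, Finset.sum_add_distrib,
    Finset.sum_ite_eq, Finset.mem_univ, if_true]

lemma dxSum_mul_dxSum :
    dxSum x d * dxSum x d = dxSum x d + ∑ j, d j * (dxSum x d * x j) := by
  nth_rw 1 [dxSum]
  simp only [Finset.sum_mul, mul_assoc, h.x_mul_dxSum, mul_add, Finset.sum_add_distrib]
  rw [add_comm, dxSum]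

lemma sum_x_mul_d : ∑ j, x j * d j = Fintype.card ι • 1 - dxSum x d := by
  simp only [h.x_mul_d_self, Finset.sum_sub_distrib, Finset.sum_const, Finset.card_univ, dxSum]

lemma sum_d_mul_x_mul_x (i : ι) : ∑ j, d j * (x i * x j) = -(dxSum x d * x i) := by
  have key (j : ι) : d j * (x i * x j) = (if j = i then x j else 0) - x i * (d j * x j) := by
    rw [← mul_assoc, h.d_mul_x, sub_mul, ite_mul, one_mul, zero_mul, mul_assoc]
  simp only [key, Finset.sum_sub_distrib, Finset.sum_ite_eq', Finset.mem_univ, if_true,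
    ← Finset.mul_sum]
  rw [← dxSum, h.x_mul_dxSum]
  abel

lemma sum_d_mul_dxSum_mul_x_mul_x (i : ι) :
    ∑ j, d j * (dxSum x d * (x i * x j)) = dxSum x d * x i - dxSum x d * (dxSum x d * x i) := by
  have key (j : ι) : d j * (dxSum x d * x j) * x i = -(d j * (dxSum x d * (x i * x j))) := by
    rw [mul_assoc, mul_assoc, h.x_mul_x j i, mul_neg, mul_neg]
  have hc := congrArg (· * x i) h.dxSum_mul_dxSum
  simp only [add_mul, Finset.sum_mul, key, Finset.sum_neg_distrib, mul_assoc] at hc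
  rw [hc]
  abel

variable [IsAddTorsionFree R]

lemma x_mul_dxSum_mul_x (j : ι) : x j * (dxSum x d * x j) = 0 := by
  rw [← mul_assoc, h.x_mul_dxSum, add_mul, mul_assoc, h.x_mul_self, mul_zero, add_zero]

lemma x_mul_dxSum_mul_x_mul_x (i j : ι) : x j * (dxSum x d * (x i * x j)) = 0 := by
  rw [← mul_assoc, h.x_mul_dxSum, add_mul, mul_assoc, h.x_mul_x_mul_x, mul_zero, add_zero]


lemma sum_x_mul_dxSkew (i : ι) :
    ∑ j, x j * dxSkew x d i j = x i - Fintype.card ι • x i + dxSum x d * x i := by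
  simp only [dxSkew, mul_sub, Finset.sum_sub_distrib, h.x_mul_d_mul_x, Finset.sum_ite_eq,
    Finset.mem_univ, if_true, ← mul_assoc, ← Finset.sum_mul, h.sum_x_mul_d, sub_mul,
    smul_mul_assoc, one_mul]
  abel

lemma sum_d_mul_dxSkew (i : ι) : ∑ j, d j * dxSkew x d i j = -(d i * dxSum x d) := by
  have key (j : ι) : d j * dxSkew x d i j = -(d i * (d j * x j)) := by
    rw [dxSkew, mul_sub, ← mul_assoc, ← mul_assoc, h.d_mul_d j i, h.d_mul_self, zero_mul,
      sub_zero, neg_mul, mul_assoc]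
  simp only [key, Finset.sum_neg_distrib, ← Finset.mul_sum, dxSum]

lemma sum_dxSkew_mul_x (i : ι) : ∑ j, dxSkew x d i j * x j = dxSum x d * x i := by
  simp only [dxSkew, sub_mul, mul_assoc, h.x_mul_self, mul_zero, zero_sub, h.x_mul_x i,
    mul_neg, neg_neg, Finset.sum_mul, dxSum]

lemma sum_dxSkew_mul_d (i : ι) :
    ∑ j, dxSkew x d i j * d j = Fintype.card ι • d i - d i * dxSum x d - d i := by
  simp only [dxSkew, sub_mul, mul_assoc, h.d_mul_x_mul_d, Finset.sum_sub_distrib,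
    Finset.sum_ite_eq, Finset.mem_univ, if_true, ← Finset.mul_sum, h.sum_x_mul_d, mul_sub,
    mul_smul_comm, mul_one]

lemma sum_dxSkew_mul_dxSum_mul_x (i : ι) :
    ∑ j, dxSkew x d i j * (dxSum x d * x j) = dxSum x d * (dxSum x d * x i) := by
  have key (j : ι) : dxSkew x d i j * (dxSum x d * x j)
      = -(d j * (dxSum x d * (x i * x j))) - d j * (x i * x j) := by
    rw [dxSkew, sub_mul, mul_assoc, h.x_mul_dxSum_mul_x, mul_zero, zero_sub, mul_assoc,
      ← mul_assoc (x i), h.x_mul_dxSum, add_mul, mul_assoc, mul_add, neg_add']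
  simp only [key, Finset.sum_sub_distrib, Finset.sum_neg_distrib,
    h.sum_d_mul_dxSum_mul_x_mul_x, h.sum_d_mul_x_mul_x]
  abel

end IsCAR

section An

variable (k : Type) [Field k] (n : ℕ)

lemma isCAR_xg_dg : IsCAR (xg k n) (dg k n) where
  x_anticomm i j := by
    simpa only [xg, map_add, map_mul, map_zero] using
      RingQuot.mkAlgHom_rel k (ARel.xixi (k := k) i j)
  d_anticomm i j := by
    simpa only [dg, map_add, map_mul, map_zero] using
      RingQuot.mkAlgHom_rel k (ARel.papa (k := k) i j)
  d_x_anticomm i j := by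
    simpa only [xg, dg, map_add, map_mul, apply_ite, map_one, map_zero] using
      RingQuot.mkAlgHom_rel k (ARel.paxi (k := k) i j)

instance [CharZero k] : IsAddTorsionFree (An k n) := .of_isTorsionFree k _

end An

section PolyNormalForm

variable {R : Type*} [Ring R]

lemma C_mul_X_mul_C (a b : R) : C a * X * C b = C (a * b) * X := by
  rw [mul_assoc, X_mul_C, ← mul_assoc, ← C_mul]

lemma C_mul_C_mul_X (a b : R) : C a * (C b * X) = C (a * b) * X := by
  rw [← mul_assoc, ← C_mul]

lemma C_mul_X_mul_C_mul_X (a b : R) : C a * X * (C b * X) = C (a * b) * X ^ 2 := by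
  rw [← mul_assoc, C_mul_X_mul_C, mul_assoc, sq]

end PolyNormalForm

section ConfCl

variable {k : Type} [Field k] {n : ℕ} {Pr : ℕ → Wc k n →ₗ[k] Wc k n →ₗ[k] Wc k n}
  {S T : Set (Wc k n)}

lemma subset_confCl : S ⊆ confCl k n Pr S :=
  fun _ hx => Submodule.mem_sInf.2 fun _ hU => hU.1 hx

lemma Dm_mem_confCl {x : Wc k n} (hx : x ∈ confCl k n Pr S) : Dm k n x ∈ confCl k n Pr S :=
  Submodule.mem_sInf.2 fun U hU => hU.2.1 x (Submodule.mem_sInf.1 hx U hU)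

lemma prod_mem_confCl (m : ℕ) {x y : Wc k n} (hx : x ∈ confCl k n Pr S)
    (hy : y ∈ confCl k n Pr S) : Pr m x y ∈ confCl k n Pr S :=
  Submodule.mem_sInf.2 fun U hU =>
    hU.2.2 m x (Submodule.mem_sInf.1 hx U hU) y (Submodule.mem_sInf.1 hy U hU)

lemma confCl_le_confCl (h : S ⊆ confCl k n Pr T) : confCl k n Pr S ≤ confCl k n Pr T :=
  sInf_le ⟨h, fun _ => Dm_mem_confCl, fun m _ hx _ hy => prod_mem_confCl m hx hy⟩

end ConfCl

section DLinear

variable {k : Type} [Field k] {n : ℕ}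

noncomputable def affD (f g : Av k n) : Wc k n := C f + Dm k n (C g)

lemma affD_add (f g f' g' : Av k n) : affD f g + affD f' g' = affD (f + f') (g + g') := by
  simp only [affD, map_add]
  abel

lemma affD_sub (f g f' g' : Av k n) : affD f g - affD f' g' = affD (f - f') (g - g') := by
  simp only [affD, map_sub]
  abel

lemma neg_affD (f g : Av k n) : -affD f g = affD (-f) (-g) := by
  simp only [affD, map_neg, neg_add]

lemma sum_affD {ι : Type*} (s : Finset ι) (f g : ι → Av k n) :
    ∑ j ∈ s, affD (f j) (g j) = affD (∑ j ∈ s, f j) (∑ j ∈ s, g j) := by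
  simp only [affD, map_sum, Finset.sum_add_distrib]

lemma smul_affD (t : k) (f g : Av k n) : t • affD f g = affD (t • f) (t • g) := by
  rw [affD, affD, smul_add, ← LinearMap.map_smul, Polynomial.smul_C, Polynomial.smul_C]

lemma vW_eq_affD : vW k n = affD X 0 := by
  simp [vW, affD]

lemma vW_mul_xiW_eq_affD (i : Fin n) : vW k n * xiW k n i = affD (C (xg k n i) * X) 0 := by
  rw [vW, xiW, ← C_mul, X_mul_C, affD, map_zero, map_zero, add_zero]

lemma paW_eq_affD (i : Fin n) : paW k n i = affD (C (dg k n i)) 0 := by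
  rw [paW, affD, map_zero, map_zero, add_zero]

variable {Pr : ℕ → Wc k n →ₗ[k] Wc k n →ₗ[k] Wc k n} (hPr : IsWProd k n Pr)
include hPr

lemma prod_one_C (f g : Av k n) : Pr 1 (C f) (C g) = C (f * derivative g) := by
  simpa using hPr.1 1 f g

lemma prod_zero_affD (f g f' g' : Av k n) :
    Pr 0 (affD f g) (affD f' g') = affD (f * f') (f * g') := by
  simp [affD, hPr.1, hPr.2.1, hPr.2.2]

lemma prod_one_affD (f g f' g' : Av k n) :
    Pr 1 (affD f g) (affD f' g')
      = affD (f * derivative f' + (f * g' - g * f')) (f * derivative g' - g * g') := by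
  simp only [affD, map_add, LinearMap.add_apply, hPr.1, hPr.2.1, hPr.2.2, Function.iterate_one,
    Function.iterate_zero, id_eq, Nat.cast_one, Nat.cast_zero, tsub_self, zero_tsub, one_smul,
    zero_smul, neg_smul, add_zero, map_mul, map_sub]
  abel

end DLinear

section Psi2

variable {k : Type} [Field k] {n : ℕ}

lemma xiI_empty : xiI k n ∅ = 1 := by
  simp [xiI]

lemma xiI_singleton (i : Fin n) : xiI k n {i} = xg k n i := by
  simp [xiI, Finset.sort_singleton]

lemma xiI_pair {i j : Fin n} (h : i < j) : xiI k n {i, j} = xg k n i * xg k n j := by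
  rw [xiI, Finset.sort_insert]
  · simp [Finset.sort_singleton]
  · intro b hb
    rw [Finset.mem_singleton.1 hb]
    exact h.le
  · simp [h.ne]

lemma dxi_of_notMem {i : Fin n} {I : Finset (Fin n)} (h : i ∉ I) : dxi k n i I = 0 :=
  if_neg h

lemma dxi_singleton (i : Fin n) : dxi k n i {i} = 1 := by
  simp [dxi, xiI_empty, Finset.filter_singleton]

lemma dxi_pair_left {i j : Fin n} (h : i < j) : dxi k n i {i, j} = xg k n j := by
  have hlt : ({i, j} : Finset (Fin n)).filter (· < i) = ∅ := by
    simp [Finset.filter_insert, Finset.filter_singleton, not_lt.2 h.le]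
  simp [dxi, hlt, Finset.erase_insert_eq_erase, h.ne, xiI_singleton]

lemma dxi_pair_right {i j : Fin n} (h : i < j) : dxi k n j {i, j} = -xg k n i := by
  have hlt : ({i, j} : Finset (Fin n)).filter (· < j) = {i} := by
    simp [Finset.filter_insert, Finset.filter_singleton, h]
  have herase : ({i, j} : Finset (Fin n)).erase j = {i} := by
    rw [Finset.pair_comm, Finset.erase_insert (by simp [h.ne'])]
  simp [dxi, hlt, herase, xiI_singleton]

lemma vW_mul_embA (a : An k n) : vW k n * embA k n a = C (C a * X) := by
  rw [vW, embA, ← map_mul, X_mul]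

lemma embD_eq_Dm (a : An k n) : embD k n a = Dm k n (embA k n a) := by
  rw [embD, Dm, LinearMap.mulLeft_apply, embA, X_mul, C_mul_X_eq_monomial]

lemma psi2_eq_affD (I : Finset (Fin n)) :
    ψ2 k n I = affD (((2 : k) - I.card) • (C (xiI k n I) * X)
        - ∑ l ∈ I, C (dg k n l * dxi k n l I))
      (C (-(dxSum (xg k n) (dg k n) * xiI k n I))) := by
  have hsub : ∑ l, embA k n (dg k n l * dxi k n l I)
      = ∑ l ∈ I, embA k n (dg k n l * dxi k n l I) :=
    (Finset.sum_subset (Finset.subset_univ I) fun l _ hl => by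
      rw [dxi_of_notMem hl, mul_zero, embA, map_zero, map_zero]).symm
  rw [ψ2, vW_mul_embA, Finset.sum_add_distrib, hsub]
  simp only [affD, embD_eq_Dm, embA, dxSum, Finset.sum_mul, map_sum, map_neg, map_sub,
    Polynomial.smul_C, mul_assoc]
  abel

end Psi2

section Psi2Products

variable {k : Type} [Field k] {n : ℕ}

local notation "x" => xg k n
local notation "d" => dg k n
local notation "c" => dxSum (xg k n) (dg k n)

lemma psi2_empty : ψ2 k n ∅ = affD ((2 : k) • X) (C (-c)) := by
  simp [psi2_eq_affD, xiI_empty]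

lemma psi2_singleton (i : Fin n) :
    ψ2 k n {i} = affD (C (x i) * X - C (d i)) (C (-(c * x i))) := by
  rw [psi2_eq_affD, Finset.sum_singleton, dxi_singleton, xiI_singleton]
  norm_num

noncomputable def psi2Ordered (i j : Fin n) : Wc k n :=
  affD (C (-dxSkew x d i j)) (C (-(c * (x i * x j))))

lemma psi2_pair {i j : Fin n} (h : i < j) : ψ2 k n {i, j} = psi2Ordered i j := by
  rw [psi2_eq_affD, Finset.sum_pair h.ne, dxi_pair_left h, dxi_pair_right h, xiI_pair h,
    Finset.card_pair h.ne, psi2Ordered, dxSkew]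
  norm_num [sub_eq_add_neg]

lemma psi2Ordered_self [CharZero k] (i : Fin n) : psi2Ordered (k := k) i i = 0 := by
  simp [psi2Ordered, dxSkew, (isCAR_xg_dg k n).x_mul_self, affD]

lemma psi2Ordered_swap (i j : Fin n) : psi2Ordered (k := k) j i = -psi2Ordered i j := by
  rw [psi2Ordered, psi2Ordered, neg_affD, (isCAR_xg_dg k n).x_mul_x j i, dxSkew, dxSkew,
    neg_sub, ← map_neg, ← map_neg, mul_neg, neg_neg, neg_neg]

lemma exists_smul_psi2_pair_eq [CharZero k] (i j : Fin n) :
    ∃ t : k, t • ψ2 k n {i, j} = psi2Ordered i j := by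
  rcases lt_trichotomy i j with h | rfl | h
  · exact ⟨1, by rw [one_smul, psi2_pair h]⟩
  · exact ⟨0, by rw [zero_smul, psi2Ordered_self]⟩
  · exact ⟨-1, by rw [Finset.pair_comm, psi2_pair h, psi2Ordered_swap, neg_one_smul, neg_neg]⟩

end Psi2Products

section Identities

variable {k : Type} [Field k] {n : ℕ}
variable {Pr : ℕ → Wc k n →ₗ[k] Wc k n →ₗ[k] Wc k n} (hPr : IsWProd k n Pr)

local notation "x" => xg k n
local notation "d" => dg k n
local notation "c" => dxSum (xg k n) (dg k n)

include hPr

lemma prod_one_psi2_empty_psi2_empty :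
    Pr 1 (ψ2 k n ∅) (ψ2 k n ∅) = affD ((4 : k) • X) (C (-(c * c))) := by
  rw [psi2_empty, prod_one_affD hPr]
  congr 1
  · simp only [derivative_smul, derivative_X, smul_mul_assoc, mul_smul_comm, mul_one, X_mul_C,
      sub_self, add_zero, smul_smul]
    norm_num
  · rw [derivative_C, mul_zero, zero_sub, ← C_mul, neg_mul_neg, map_neg]

lemma prod_zero_psi2_singleton_self [CharZero k] (j : Fin n) :
    Pr 0 (ψ2 k n {j}) (ψ2 k n {j}) = affD (-X) (C (d j * (c * x j))) := by
  have h := isCAR_xg_dg k n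
  rw [psi2_singleton, prod_zero_affD hPr]
  congr 1
  · simp only [mul_sub, sub_mul, C_mul_X_mul_C_mul_X, C_mul_X_mul_C, C_mul_C_mul_X, ← C_mul,
      h.x_mul_self, h.d_mul_self, h.x_mul_d_self, map_zero, map_sub, map_one, zero_mul, one_mul]
    abel
  · rw [sub_mul, C_mul_X_mul_C, ← C_mul, mul_neg, mul_neg, h.x_mul_dxSum_mul_x, neg_zero,
      map_zero, zero_mul, zero_sub, map_neg, neg_neg]

lemma psi2_combination_eq_smul_vW [CharZero k] :
    ψ2 k n ∅ - Pr 1 (ψ2 k n ∅) (ψ2 k n ∅) - ∑ j, Pr 0 (ψ2 k n {j}) (ψ2 k n {j})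
      = ((n : k) - 2) • vW k n := by
  rw [prod_one_psi2_empty_psi2_empty hPr]
  simp only [prod_zero_psi2_singleton_self hPr, psi2_empty, sum_affD, affD_sub, vW_eq_affD,
    smul_affD, smul_zero]
  congr 1
  · simp only [Finset.sum_neg_distrib, Finset.sum_const, Finset.card_univ, Fintype.card_fin]
    module
  · rw [← map_sum, ← map_sub, ← map_sub, (isCAR_xg_dg k n).dxSum_mul_dxSum]
    simp

lemma prod_one_psi2_empty_psi2_singleton (i : Fin n) :
    Pr 1 (ψ2 k n ∅) (ψ2 k n {i})
      = affD ((2 : k) • (C (x i) * X) - (2 : k) • (C (c * x i) * X) + C (c * x i) * X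
          - C (c * d i)) (C (-(c * (c * x i)))) := by
  rw [psi2_empty, psi2_singleton, prod_one_affD hPr]
  congr 1
  · simp only [derivative_sub, derivative_C_mul_X, derivative_C, sub_zero, smul_mul_assoc,
      X_mul_C, mul_sub, C_mul_C_mul_X, ← C_mul, map_neg, mul_neg, neg_mul]
    abel
  · rw [derivative_C, mul_zero, zero_sub, ← C_mul, neg_mul_neg, map_neg]

lemma prod_zero_psi2_singleton_psi2Ordered [CharZero k] (i j : Fin n) :
    Pr 0 (ψ2 k n {j}) (psi2Ordered i j)
      = affD (-(C (x j * dxSkew x d i j) * X) + C (d j * dxSkew x d i j))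
          (C (d j * (c * (x i * x j)))) := by
  rw [psi2_singleton, psi2Ordered, prod_zero_affD hPr]
  congr 1
  · rw [sub_mul, C_mul_X_mul_C, ← C_mul, mul_neg, mul_neg, map_neg, map_neg, neg_mul]
    abel
  · rw [sub_mul, C_mul_X_mul_C, ← C_mul, mul_neg, mul_neg,
      (isCAR_xg_dg k n).x_mul_dxSum_mul_x_mul_x, neg_zero, map_zero, zero_mul, zero_sub, map_neg,
      neg_neg]

lemma psi2_combination_eq_smul_vW_mul_xiW [CharZero k] (i : Fin n) :
    ψ2 k n {i} - Pr 1 (ψ2 k n ∅) (ψ2 k n {i}) + ∑ j, Pr 0 (ψ2 k n {j}) (psi2Ordered i j)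
      = ((n : k) - 2) • (vW k n * xiW k n i) := by
  have h := isCAR_xg_dg k n
  rw [prod_one_psi2_empty_psi2_singleton hPr]
  simp only [prod_zero_psi2_singleton_psi2Ordered hPr]
  simp only [psi2_singleton, sum_affD, affD_sub, affD_add, vW_mul_xiW_eq_affD, smul_affD,
    smul_zero]
  congr 1
  · simp only [Finset.sum_add_distrib, Finset.sum_neg_distrib, ← Finset.sum_mul, ← map_sum,
      h.sum_x_mul_dxSkew, h.sum_d_mul_dxSkew, h.dxSum_mul_d, Fintype.card_fin]
    simp only [map_add, map_sub, map_neg, map_nsmul, add_mul, sub_mul, smul_mul_assoc]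
    module
  · rw [← map_sum, h.sum_d_mul_dxSum_mul_x_mul_x]
    simp only [map_neg, map_sub]
    abel

lemma prod_one_psi2_singleton_psi2_empty (i : Fin n) :
    Pr 1 (ψ2 k n {i}) (ψ2 k n ∅)
      = affD ((2 : k) • (C (x i) * X) - (2 : k) • C (d i) - C (x i * c) * X + C (d i * c)
          + (2 : k) • (C (c * x i) * X)) (C (-(c * x i * c))) := by
  rw [psi2_empty, psi2_singleton, prod_one_affD hPr]
  congr 1
  · simp only [derivative_smul, derivative_X, mul_smul_comm, mul_one, sub_mul, C_mul_X_mul_C,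
      ← C_mul, smul_sub, map_neg, mul_neg, neg_mul]
    module
  · rw [derivative_C, mul_zero, zero_sub, ← C_mul, neg_mul_neg, map_neg]

lemma prod_zero_psi2Ordered_psi2_singleton (i j : Fin n) :
    Pr 0 (psi2Ordered i j) (ψ2 k n {j})
      = affD (-(C (dxSkew x d i j * x j) * X) + C (dxSkew x d i j * d j))
          (C (dxSkew x d i j * (c * x j))) := by
  rw [psi2_singleton, psi2Ordered, prod_zero_affD hPr]
  congr 1
  · rw [mul_sub, C_mul_C_mul_X, ← C_mul, neg_mul, neg_mul, map_neg, map_neg, neg_mul]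
    abel
  · rw [← C_mul, neg_mul_neg]

lemma psi2_combination_eq_smul_paW [CharZero k] (i : Fin n) :
    -ψ2 k n {i} + Pr 1 (ψ2 k n {i}) (ψ2 k n ∅) + ∑ j, Pr 0 (psi2Ordered i j) (ψ2 k n {j})
      = ((n : k) - 2) • paW k n i := by
  have h := isCAR_xg_dg k n
  rw [prod_one_psi2_singleton_psi2_empty hPr]
  simp only [prod_zero_psi2Ordered_psi2_singleton hPr]
  simp only [psi2_singleton, sum_affD, neg_affD, affD_add, paW_eq_affD, smul_affD, smul_zero]
  congr 1
  · simp only [Finset.sum_add_distrib, Finset.sum_neg_distrib, ← Finset.sum_mul, ← map_sum,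
      h.sum_dxSkew_mul_x, h.sum_dxSkew_mul_d, h.x_mul_dxSum, Fintype.card_fin]
    simp only [map_add, map_sub, map_nsmul, add_mul]
    module
  · rw [← map_sum, h.sum_dxSkew_mul_dxSum_mul_x, mul_assoc, h.x_mul_dxSum]
    simp only [map_neg, map_add, mul_add]
    abel

end Identities

section MemC2

variable {k : Type} [Field k] {n : ℕ}
variable {Pr : ℕ → Wc k n →ₗ[k] Wc k n →ₗ[k] Wc k n} (hPr : IsWProd k n Pr)
include hPr

lemma C_C_prod_xg_mul_X_mem_C2sub (l : List (Fin n)) :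
    C (C (l.map (xg k n)).prod * X) ∈ C2sub k n Pr := by
  induction l with
  | nil =>
    have hv : vW k n ∈ C2sub k n Pr := subset_confCl (Or.inl (Or.inl rfl))
    simpa [vW] using hv
  | cons j l ih =>
    have hj : vW k n * xiW k n j ∈ C2sub k n Pr :=
      subset_confCl (Or.inl (Or.inr ⟨j, rfl⟩))
    have key : Pr 1 (vW k n * xiW k n j) (C (C (l.map (xg k n)).prod * X))
        = C (C ((j :: l).map (xg k n)).prod * X) := by
      rw [vW, xiW, ← C_mul, X_mul_C, prod_one_C hPr, derivative_C_mul_X,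
        C_mul_X_mul_C, List.map_cons, List.prod_cons]
    exact key ▸ prod_mem_confCl 1 hj ih

lemma C_C_dg_mul_prod_xg_mem_C2sub (i : Fin n) (l : List (Fin n)) :
    C (C (dg k n i * (l.map (xg k n)).prod)) ∈ C2sub k n Pr := by
  have hi : paW k n i ∈ C2sub k n Pr := subset_confCl (Or.inr ⟨i, rfl⟩)
  have key : Pr 1 (paW k n i) (C (C (l.map (xg k n)).prod * X))
      = C (C (dg k n i * (l.map (xg k n)).prod)) := by
    rw [paW, prod_one_C hPr, derivative_C_mul_X, ← C_mul]
  exact key ▸ prod_mem_confCl 1 hi (C_C_prod_xg_mul_X_mem_C2sub hPr l)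

lemma psi2_mem_C2sub (I : Finset (Fin n)) : ψ2 k n I ∈ C2sub k n Pr := by
  rw [psi2_eq_affD, affD]
  refine add_mem ?_ (Dm_mem_confCl ?_)
  · rw [map_sub, map_sum, ← Polynomial.smul_C]
    refine sub_mem (Submodule.smul_mem _ _ (C_C_prod_xg_mul_X_mem_C2sub hPr _))
      (sum_mem fun l hl => ?_)
    rw [dxi, if_pos hl, mul_smul_comm, ← Polynomial.smul_C, ← Polynomial.smul_C]
    exact Submodule.smul_mem _ _ (C_C_dg_mul_prod_xg_mem_C2sub hPr l _)
  · rw [dxSum, Finset.sum_mul, map_neg, map_neg, map_sum, map_sum]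
    refine neg_mem (sum_mem fun l _ => ?_)
    rw [mul_assoc, xiI, ← List.prod_cons, ← List.map_cons]
    exact C_C_dg_mul_prod_xg_mem_C2sub hPr l _

end MemC2

theorem stmt_14_general (k : Type) [Field k] [CharZero k] (n : ℕ) (hn2 : n ≠ 2)
    (Pr : ℕ → Wc k n →ₗ[k] Wc k n →ₗ[k] Wc k n) (hPr : IsWProd k n Pr) :
    confCl k n Pr (Set.range (fun I : Finset (Fin n) => ψ2 k n I)) = C2sub k n Pr := by
  set Ψ := confCl k n Pr (Set.range (fun I : Finset (Fin n) => ψ2 k n I))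
  have hψ (I : Finset (Fin n)) : ψ2 k n I ∈ Ψ := subset_confCl ⟨I, rfl⟩
  have hOrd (i j : Fin n) : psi2Ordered i j ∈ Ψ := by
    obtain ⟨t, ht⟩ := exists_smul_psi2_pair_eq (k := k) i j
    exact ht ▸ Ψ.smul_mem t (hψ _)
  have of_smul {w : Wc k n} (hw : ((n : k) - 2) • w ∈ Ψ) : w ∈ Ψ :=
    (Submodule.smul_mem_iff _ (sub_ne_zero.2 (by exact_mod_cast hn2))).1 hw
  refine le_antisymm (confCl_le_confCl ?_) (confCl_le_confCl ?_)
  · rintro _ ⟨I, rfl⟩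
    exact psi2_mem_C2sub hPr I
  · rintro _ ((rfl | ⟨i, rfl⟩) | ⟨i, rfl⟩) <;> apply of_smul
    · rw [← psi2_combination_eq_smul_vW hPr]
      exact sub_mem (sub_mem (hψ _) (prod_mem_confCl 1 (hψ _) (hψ _)))
        (sum_mem fun j _ => prod_mem_confCl 0 (hψ _) (hψ _))
    · rw [← psi2_combination_eq_smul_vW_mul_xiW hPr]
      exact add_mem (sub_mem (hψ _) (prod_mem_confCl 1 (hψ _) (hψ _)))
        (sum_mem fun j _ => prod_mem_confCl 0 (hψ _) (hOrd i j))
    · rw [← psi2_combination_eq_smul_paW hPr]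
      exact add_mem (add_mem (neg_mem (hψ _)) (prod_mem_confCl 1 (hψ _) (hψ _)))
        (sum_mem fun j _ => prod_mem_confCl 0 (hOrd i j) (hψ _))

/-- for `n ≥ 1`, `n ≠ 2`, the conformal subalgebra of `W` generated by
`{ψ₂(g_I) : I ⊆ {1,…,n}}` equals `C₂`, i.e. `(C₂, ψ₂)` is an associative envelope of
the conformal superalgebra `Kₙ`. -/
theorem stmt_14 (k : Type) [Field k] [CharZero k] (n : ℕ) (hn : 1 ≤ n) (hn2 : n ≠ 2)
    (Pr : ℕ → Wc k n →ₗ[k] Wc k n →ₗ[k] Wc k n) (hPr : IsWProd k n Pr) :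
    confCl k n Pr (Set.range (fun I : Finset (Fin n) => ψ2 k n I)) = C2sub k n Pr :=
  stmt_14_general k n hn2 Pr hPr
end
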